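/- arXiv:1404.4854 — 5 statements merged into one kernel-verified Lean document; each statement's English description precedes it below -/
import Mathlib

section
/- Let m ∈ ℕ, ε₀ > 0, and let h : ℝ × ℝ^m → ℝ be smooth on an open neighborhood of K_{ε₀} and such that for every k ∈ ℕ and every multi-index α there is a constant c_{kα} > 0 with |∂_r^k ∂_z^α h(r,z)| ≤ c_{kα} for all (r,z) ∈ K_{ε₀}. If there is c > 0 such that |h(r,z)| ≤ c·r for all (r,z) ∈ K_{ε₀}, then for every k ∈ ℕ there is a constant c_k > 0 such that |∂_r^k (h(r,z)/r)| ≤ c_k for all (r,z) ∈ K_{ε₀} with r > 0. -/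
/-- Partial derivative in the radial variable `r` of a function `h(r, z)`. -/
noncomputable def pr {m : ℕ} (h : ℝ × (Fin m → ℝ) → ℝ) : ℝ × (Fin m → ℝ) → ℝ :=
  fun p => deriv (fun t => h (t, p.2)) p.1

/-- Partial derivative in the variable `z i` of a function `h(r, z)`. -/
noncomputable def pzi {m : ℕ} (i : Fin m) (h : ℝ × (Fin m → ℝ) → ℝ) :
    ℝ × (Fin m → ℝ) → ℝ :=
  fun p => deriv (fun t => h (p.1, Function.update p.2 i t)) (p.2 i)

/-- Iterated partial derivatives in the `z` variables according to the
multi-index recorded by the list `αs` of coordinate indices. -/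
noncomputable def pz {m : ℕ} (αs : List (Fin m)) (h : ℝ × (Fin m → ℝ) → ℝ) :
    ℝ × (Fin m → ℝ) → ℝ :=
  αs.foldr pzi h

/-- `K_ε = {(r,z) : r ≥ 0, (r² + |z|²)^{1/2} ≤ ε}` with `|z|` the Euclidean norm. -/
def Kset (m : ℕ) (ε : ℝ) : Set (ℝ × (Fin m → ℝ)) :=
  {p | 0 ≤ p.1 ∧ Real.sqrt (p.1 ^ 2 + ∑ i, p.2 i ^ 2) ≤ ε}

/-!
The bound `|h| ≤ c r` forces `h(0, z) = 0`, so on each slice `f = h(·, z)` the fundamental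
theorem of calculus gives `f(r)/r = ∫₀¹ f'(t r) dt`. Differentiating under the integral sign,
`∂_r^k (f(r)/r) = ∫₀¹ t^k f^{(k+1)}(t r) dt`, and this is bounded by the bound on `∂_r^{k+1} h`
along the segment from `(0, z)` to `(r, z)`, which stays in `K_ε`.
-/

open Set Filter Topology
open scoped Interval ContDiff

lemma pr_iterate_apply {m : ℕ} (k : ℕ) (F : ℝ × (Fin m → ℝ) → ℝ) (r : ℝ) (z : Fin m → ℝ) :
    (pr)^[k] F (r, z) = deriv^[k] (fun t => F (t, z)) r := by
  induction k generalizing F with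
  | zero => rfl
  | succ n ih =>
    rw [Function.iterate_succ_apply, Function.iterate_succ_apply, ih (pr F)]
    rfl

lemma mk_mem_Kset_of_le {m : ℕ} {ε r t : ℝ} {z : Fin m → ℝ} (hp : (r, z) ∈ Kset m ε)
    (ht₀ : 0 ≤ t) (htr : t ≤ r) : (t, z) ∈ Kset m ε :=
  ⟨ht₀, (Real.sqrt_le_sqrt (by gcongr)).trans hp.2⟩

lemma IsOpen.exists_Icc_subset_of_Icc_subset {V : Set ℝ} (hV : IsOpen V) {a r : ℝ}
    (hrV : Icc a r ⊆ V) (har : a ≤ r) : ∃ b > r, Icc a b ⊆ V := by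
  obtain ⟨u, hru, hu⟩ :=
    exists_Ico_subset_of_mem_nhds (hV.mem_nhds (hrV ⟨har, le_rfl⟩)) ⟨r + 1, by linarith⟩
  refine ⟨(r + u) / 2, by linarith, fun t ht => ?_⟩
  rcases le_or_gt t r with htr | hrt
  · exact hrV ⟨ht.1, htr⟩
  · exact hu ⟨hrt.le, by linarith [ht.2]⟩

lemma ContDiffOn.iterate_deriv_of_isOpen {𝕜 F : Type*} [NontriviallyNormedField 𝕜]
    [NormedAddCommGroup F] [NormedSpace 𝕜 F] {f : 𝕜 → F} {V : Set 𝕜}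
    (hf : ContDiffOn 𝕜 ∞ f V) (hV : IsOpen V) (j : ℕ) : ContDiffOn 𝕜 ∞ (deriv^[j] f) V := by
  induction j with
  | zero => exact hf
  | succ j ih =>
    rw [Function.iterate_succ_apply']
    exact ih.deriv_of_isOpen hV le_rfl

lemma hasDerivAt_integral_pow_mul_comp_mul {g : ℝ → ℝ} {V : Set ℝ} {b ρ : ℝ} (hV : IsOpen V)
    (hg : ContDiffOn ℝ 1 g V) (hbV : Icc 0 b ⊆ V) (hρ : ρ ∈ Ioo 0 b) (j : ℕ) :
    HasDerivAt (fun x => ∫ t in (0 : ℝ)..1, t ^ j * g (t * x))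
      (∫ t in (0 : ℝ)..1, t ^ (j + 1) * deriv g (t * ρ)) ρ := by
  have hmem : ∀ t ∈ Icc (0 : ℝ) 1, ∀ x ∈ Ioo 0 b, t * x ∈ Icc 0 b := fun t ht x hx =>
    ⟨mul_nonneg ht.1 hx.1.le, (mul_le_of_le_one_left hx.1.le ht.2).trans hx.2.le⟩
  have hcont : ∀ {φ : ℝ → ℝ}, ContinuousOn φ V → ∀ i : ℕ, ∀ x ∈ Ioo 0 b,
      ContinuousOn (fun t => t ^ i * φ (t * x)) (Icc 0 1) := fun hφ i x hx =>
    (continuousOn_pow i).mul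
      (hφ.comp (continuous_mul_const x).continuousOn fun t ht => hbV (hmem t ht x hx))
  have hg' : ContinuousOn (deriv g) V := hg.continuousOn_deriv_of_isOpen hV le_rfl
  obtain ⟨M, hM⟩ := isCompact_Icc.exists_bound_of_continuousOn (hg'.mono hbV)
  have hIoc : Ι (0 : ℝ) 1 = Ioc 0 1 := uIoc_of_le zero_le_one
  refine (intervalIntegral.hasDerivAt_integral_of_dominated_loc_of_deriv_le
    (F := fun x t => t ^ j * g (t * x)) (F' := fun x t => t ^ (j + 1) * deriv g (t * x))
    (bound := fun _ => M) (isOpen_Ioo.mem_nhds hρ) ?_ ?_ ?_ ?_ intervalIntegrable_const ?_).2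
  · filter_upwards [isOpen_Ioo.mem_nhds hρ] with x hx
    rw [hIoc]
    exact ((hcont hg.continuousOn j x hx).mono Ioc_subset_Icc_self).aestronglyMeasurable
      measurableSet_Ioc
  · exact (hcont hg.continuousOn j ρ hρ).intervalIntegrable_of_Icc zero_le_one
  · rw [hIoc]
    exact ((hcont hg' (j + 1) ρ hρ).mono Ioc_subset_Icc_self).aestronglyMeasurable
      measurableSet_Ioc
  · refine MeasureTheory.ae_of_all _ fun t ht x hx => ?_
    rw [hIoc] at ht
    rw [norm_mul, norm_pow, Real.norm_eq_abs, abs_of_pos ht.1]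
    calc t ^ (j + 1) * ‖deriv g (t * x)‖ ≤ 1 * M := by
          gcongr
          · exact pow_le_one₀ ht.1.le ht.2
          · exact hM _ (hmem t (Ioc_subset_Icc_self ht) x hx)
      _ = M := one_mul M
  · refine MeasureTheory.ae_of_all _ fun t ht x hx => ?_
    rw [hIoc] at ht
    have htx : t * x ∈ V := hbV (hmem t (Ioc_subset_Icc_self ht) x hx)
    have hd : HasDerivAt g (deriv g (t * x)) (t * x) :=
      ((hg.differentiableOn one_ne_zero).differentiableAt (hV.mem_nhds htx)).hasDerivAt
    exact ((hd.comp x ((hasDerivAt_id x).const_mul t)).const_mul (t ^ j)).congr_deriv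
      (by ring)

lemma iterate_deriv_integral_deriv_comp_mul {f : ℝ → ℝ} {V : Set ℝ} {b : ℝ} (hV : IsOpen V)
    (hf : ContDiffOn ℝ ∞ f V) (hbV : Icc 0 b ⊆ V) (j : ℕ) :
    ∀ ρ ∈ Ioo 0 b, deriv^[j] (fun x => ∫ t in (0 : ℝ)..1, deriv f (t * x)) ρ =
      ∫ t in (0 : ℝ)..1, t ^ j * deriv^[j + 1] f (t * ρ) := by
  induction j with
  | zero => intro ρ _; simp
  | succ j ih =>
    intro ρ hρ
    rw [Function.iterate_succ_apply', (eventuallyEq_of_mem (isOpen_Ioo.mem_nhds hρ) ih).deriv_eq]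
    simpa only [Function.iterate_succ_apply'] using (hasDerivAt_integral_pow_mul_comp_mul hV
      ((hf.iterate_deriv_of_isOpen hV (j + 1)).of_le (by simp)) hbV hρ j).deriv

lemma div_eq_integral_deriv_comp_mul {f : ℝ → ℝ} {V : Set ℝ} {ρ : ℝ} (hV : IsOpen V)
    (hf : ContDiffOn ℝ 1 f V) (hf0 : f 0 = 0) (hρ : 0 < ρ) (hρV : Icc 0 ρ ⊆ V) :
    f ρ / ρ = ∫ t in (0 : ℝ)..1, deriv f (t * ρ) := by
  have huIcc : uIcc 0 ρ = Icc 0 ρ := uIcc_of_le hρ.le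
  have hftc : ∫ u in (0 : ℝ)..ρ, deriv f u = f ρ := by
    rw [intervalIntegral.integral_deriv_eq_sub, hf0, sub_zero]
    · intro x hx
      rw [huIcc] at hx
      exact (hf.differentiableOn one_ne_zero).differentiableAt (hV.mem_nhds (hρV hx))
    · refine ContinuousOn.intervalIntegrable ?_
      rw [huIcc]
      exact (hf.continuousOn_deriv_of_isOpen hV le_rfl).mono hρV
  rw [intervalIntegral.integral_comp_mul_right _ hρ.ne', zero_mul, one_mul, hftc, smul_eq_mul,
    inv_mul_eq_div]

theorem abs_iterate_deriv_div_le {f : ℝ → ℝ} {V : Set ℝ} {r C : ℝ} (hV : IsOpen V)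
    (hf : ContDiffOn ℝ ∞ f V) (hf0 : f 0 = 0) (hr : 0 < r) (hrV : Icc 0 r ⊆ V) (k : ℕ)
    (hC : ∀ t ∈ Icc 0 r, |deriv^[k + 1] f t| ≤ C) :
    |deriv^[k] (fun t => f t / t) r| ≤ C := by
  -- The integral formula is needed on a neighbourhood of `r`, hence on `(0, b)` for some `b > r`.
  obtain ⟨b, hrb, hbV⟩ := hV.exists_Icc_subset_of_Icc_subset hrV hr.le
  have hr' : r ∈ Ioo 0 b := ⟨hr, hrb⟩
  have heq : (fun t => f t / t) =ᶠ[𝓝 r] fun x => ∫ t in (0 : ℝ)..1, deriv f (t * x) :=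
    eventuallyEq_of_mem (isOpen_Ioo.mem_nhds hr') fun ρ hρ =>
      div_eq_integral_deriv_comp_mul hV (hf.of_le (by simp)) hf0 hρ.1
        ((Icc_subset_Icc_right hρ.2.le).trans hbV)
  rw [← iteratedDeriv_eq_iterate, (heq.iteratedDeriv k).eq_of_nhds, iteratedDeriv_eq_iterate,
    iterate_deriv_integral_deriv_comp_mul hV hf hbV k r hr']
  have hintegrand : ∀ t ∈ Ι (0 : ℝ) 1, ‖t ^ k * deriv^[k + 1] f (t * r)‖ ≤ C := by
    intro t ht
    rw [uIoc_of_le zero_le_one] at ht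
    rw [Real.norm_eq_abs, abs_mul, abs_pow, abs_of_pos ht.1]
    calc t ^ k * |deriv^[k + 1] f (t * r)| ≤ 1 * C := by
          gcongr
          · exact pow_le_one₀ ht.1.le ht.2
          · exact hC _ ⟨mul_nonneg ht.1.le hr.le, mul_le_of_le_one_left hr.le ht.2⟩
      _ = C := one_mul C
  simpa using intervalIntegral.norm_integral_le_of_norm_le_const hintegrand

theorem stmt0_general (m : ℕ) (ε₀ : ℝ) (h : ℝ × (Fin m → ℝ) → ℝ)
    (U : Set (ℝ × (Fin m → ℝ))) (hU : IsOpen U) (hKU : Kset m ε₀ ⊆ U)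
    (hsmooth : ContDiffOn ℝ (⊤ : ℕ∞) h U)
    (hder : ∀ (k : ℕ) (αs : List (Fin m)), ∃ c > (0 : ℝ), ∀ p ∈ Kset m ε₀,
      |(pr)^[k] (pz αs h) p| ≤ c)
    (c : ℝ) (hbound : ∀ p ∈ Kset m ε₀, |h p| ≤ c * p.1) :
    ∀ k : ℕ, ∃ ck > (0 : ℝ), ∀ p ∈ Kset m ε₀, 0 < p.1 →
      |(pr)^[k] (fun q => h q / q.1) p| ≤ ck := by
  intro k
  obtain ⟨ck, hck, hckb⟩ := hder (k + 1) []
  refine ⟨ck, hck, ?_⟩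
  rintro ⟨r, z⟩ hp hr
  have hslice : ∀ t ∈ Icc 0 r, (t, z) ∈ Kset m ε₀ := fun t ht => mk_mem_Kset_of_le hp ht.1 ht.2
  have hV : IsOpen ((fun t : ℝ => (t, z)) ⁻¹' U) :=
    hU.preimage (continuous_id.prodMk continuous_const)
  have hf : ContDiffOn ℝ ∞ (fun t => h (t, z)) ((fun t : ℝ => (t, z)) ⁻¹' U) :=
    hsmooth.comp (contDiff_id.prodMk contDiff_const).contDiffOn fun _ ht => ht
  have hf0 : h (0, z) = 0 :=
    abs_nonpos_iff.1 (by simpa using hbound (0, z) (hslice 0 ⟨le_rfl, hr.le⟩))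
  rw [pr_iterate_apply]
  exact abs_iterate_deriv_div_le hV hf hf0 hr (fun t ht => hKU (hslice t ht)) k fun t ht => by
    simpa [pz, pr_iterate_apply] using hckb (t, z) (hslice t ht)

theorem stmt0 (m : ℕ) (ε₀ : ℝ) (hε₀ : 0 < ε₀) (h : ℝ × (Fin m → ℝ) → ℝ)
    (U : Set (ℝ × (Fin m → ℝ))) (hU : IsOpen U) (hKU : Kset m ε₀ ⊆ U)
    (hsmooth : ContDiffOn ℝ (⊤ : ℕ∞) h U)
    (hder : ∀ (k : ℕ) (αs : List (Fin m)), ∃ c > (0 : ℝ), ∀ p ∈ Kset m ε₀,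
      |(pr)^[k] (pz αs h) p| ≤ c)
    (c : ℝ) (hc : 0 < c) (hbound : ∀ p ∈ Kset m ε₀, |h p| ≤ c * p.1) :
    ∀ k : ℕ, ∃ ck > (0 : ℝ), ∀ p ∈ Kset m ε₀, 0 < p.1 →
      |(pr)^[k] (fun q => h q / q.1) p| ≤ ck :=
  stmt0_general m ε₀ h U hU hKU hsmooth hder c hbound
end

section
/- Let m ∈ ℕ, ε₀ > 0, l ∈ ℕ with l ≥ 1, and let h : ℝ × ℝ^m → ℝ be smooth on an open neighborhood of K_{ε₀} and such that for every k ∈ ℕ and every multi-index α there is a constant c_{kα} > 0 with |∂_r^k ∂_z^α h(r,z)| ≤ c_{kα} for all (r,z) ∈ K_{ε₀}. Set f(r,z) = r^{-l} h(r,z) for r > 0, and assume there is c > 0 such that |f(r,z)| ≤ c for all (r,z) ∈ K_{ε₀} with r > 0. Then for every k ∈ ℕ there is a constant c_k > 0 such that |∂_r^k f(r,z)| ≤ c_k for all (r,z) ∈ K_{ε₀} with r > 0. -/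
/-!
Fix `z` and put `u t = h (t, z)`. Since `|u t| ≤ c t ^ l` for small `t > 0`, the Lagrange form of
Taylor's theorem at `0` forces `u⁽ʲ⁾(0) = 0` for `j < l`. For `t > 0` one has
`(u / t ^ l)⁽ᵏ⁾ = A_k / t ^ (l + k)` with `A_0 = u`, `A_{k+1} = t A_k' - (l + k) A_k`; inductively
`A_k` vanishes to order `l + k` at `0`, so Taylor's theorem gives
`|A_k t| ≤ sup |A_k⁽ˡ⁺ᵏ⁾| t ^ (l + k) / (l + k)!` and the powers of `t` cancel. The derivatives of
`A_k` are controlled by `t` and the derivatives of `u`, i.e. by the bounds on `∂_r^n h`, which are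
uniform in `z`.
-/

open Filter Set Topology
open scoped ContDiff Nat

section OneVariable

variable {I : Set ℝ} {u : ℝ → ℝ}

theorem ContDiffOn.iterate_deriv_of_isOpen_s1 (hu : ContDiffOn ℝ ∞ u I) (hI : IsOpen I) :
    ∀ n : ℕ, ContDiffOn ℝ ∞ (deriv^[n] u) I
  | 0 => hu
  | n + 1 => by
    rw [Function.iterate_succ_apply']
    exact (hu.iterate_deriv_of_isOpen_s1 hI n).deriv_of_isOpen hI (by simp)

theorem ContDiffOn.hasDerivAt_iterate_deriv (hu : ContDiffOn ℝ ∞ u I) (hI : IsOpen I) (n : ℕ)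
    {t : ℝ} (ht : t ∈ I) : HasDerivAt (deriv^[n] u) (deriv^[n + 1] u t) t := by
  rw [Function.iterate_succ_apply']
  exact (((hu.iterate_deriv_of_isOpen_s1 hI n).differentiableOn (by simp)).differentiableAt
    (hI.mem_nhds ht)).hasDerivAt

theorem Filter.EventuallyEq.iterate_deriv_eq {v : ℝ → ℝ} {t : ℝ} (huv : u =ᶠ[𝓝 t] v) (n : ℕ) :
    deriv^[n] u t = deriv^[n] v t := by
  simpa only [iteratedDeriv_eq_iterate] using huv.iteratedDeriv_eq n

theorem ContDiffOn.exists_eq_iterate_deriv_mul_pow (hu : ContDiffOn ℝ ∞ u I) (hI : IsOpen I)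
    {t : ℝ} (ht : 0 < t) (hsub : Icc 0 t ⊆ I) {n : ℕ} (hvan : ∀ i < n, deriv^[i] u 0 = 0) :
    ∃ ξ ∈ Icc 0 t, u t = deriv^[n] u ξ * t ^ n / n ! := by
  cases n with
  | zero => exact ⟨t, right_mem_Icc.2 ht.le, by simp⟩
  | succ n =>
    rw [← uIcc_of_le ht.le] at hsub
    obtain ⟨ξ, hξ, hrem⟩ := taylor_mean_remainder_lagrange_iteratedDeriv (n := n) ht.ne
      ((hu.mono hsub).of_le (mod_cast le_top))
    have htaylor : taylorWithinEval u n (uIcc 0 t) 0 t = 0 := by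
      rw [taylor_within_apply]
      refine Finset.sum_eq_zero fun i hi => ?_
      have hu0 : ContDiffAt ℝ i u 0 :=
        (hu.contDiffAt (hI.mem_nhds (hsub left_mem_uIcc))).of_le (mod_cast le_top)
      rw [iteratedDerivWithin_eq_iteratedDeriv (uniqueDiffOn_uIcc ht.ne) hu0 left_mem_uIcc,
        iteratedDeriv_eq_iterate, hvan i (Finset.mem_range.mp hi), smul_zero]
    rw [uIoo_of_le ht.le] at hξ
    refine ⟨ξ, Ioo_subset_Icc_self hξ, ?_⟩
    rw [htaylor, sub_zero, sub_zero] at hrem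
    rw [← iteratedDeriv_eq_iterate, hrem]

theorem ContDiffOn.abs_le_of_iterate_deriv_eq_zero (hu : ContDiffOn ℝ ∞ u I) (hI : IsOpen I)
    {t : ℝ} (ht : 0 < t) (hsub : Icc 0 t ⊆ I) {n : ℕ} (hvan : ∀ i < n, deriv^[i] u 0 = 0)
    {B : ℝ} (hB : ∀ s ∈ Icc 0 t, |deriv^[n] u s| ≤ B) : |u t| ≤ B * t ^ n / n ! := by
  obtain ⟨ξ, hξ, heq⟩ := hu.exists_eq_iterate_deriv_mul_pow hI ht hsub hvan
  rw [heq, abs_div, abs_mul, abs_pow, abs_of_pos ht, Nat.abs_cast]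
  gcongr
  exact hB ξ hξ

theorem ContDiffOn.iterate_deriv_eq_zero_of_abs_le_pow (hu : ContDiffOn ℝ ∞ u I) (hI : IsOpen I)
    {ρ : ℝ} (hρ : 0 < ρ) (hsub : Icc 0 ρ ⊆ I) {c : ℝ} {l : ℕ}
    (hbd : ∀ t ∈ Ioc 0 ρ, |u t| ≤ c * t ^ l) : ∀ j < l, deriv^[j] u 0 = 0 := by
  intro j
  induction j using Nat.strong_induction_on with
  | _ j ih =>
  intro hj
  have hmean : ∀ t ∈ Ioc 0 ρ, ∃ ξ ∈ Icc 0 t, |deriv^[j] u ξ| ≤ j ! * c * t ^ (l - j) := by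
    intro t ht
    obtain ⟨ξ, hξ, heq⟩ := hu.exists_eq_iterate_deriv_mul_pow hI ht.1
      ((Icc_subset_Icc_right ht.2).trans hsub) fun i hi => ih i hi (hi.trans hj)
    refine ⟨ξ, hξ, ?_⟩
    have htj : 0 < t ^ j := pow_pos ht.1 j
    have hsplit : t ^ l = t ^ j * t ^ (l - j) := by rw [← pow_add, Nat.add_sub_cancel' hj.le]
    have := hbd t ht
    rw [heq, hsplit, abs_div, abs_mul, abs_of_pos htj, Nat.abs_cast,
      div_le_iff₀ (by positivity)] at this
    nlinarith
  choose! ξ hξ hξbd using hmean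
  have hnear : ∀ᶠ t in 𝓝[>] 0, t ∈ Ioc 0 ρ := Ioc_mem_nhdsGT hρ
  have hξ0 : Tendsto ξ (𝓝[>] 0) (𝓝 0) :=
    tendsto_of_tendsto_of_tendsto_of_le_of_le' tendsto_const_nhds
      (tendsto_nhdsWithin_of_tendsto_nhds tendsto_id)
      (hnear.mono fun t ht => (hξ t ht).1) (hnear.mono fun t ht => (hξ t ht).2)
  have hcont : ContinuousAt (deriv^[j] u) 0 :=
    ((hu.iterate_deriv_of_isOpen_s1 hI j).continuousOn.continuousAt
      (hI.mem_nhds (hsub (left_mem_Icc.2 hρ.le))))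
  have hpow : Tendsto (fun t : ℝ => j ! * c * t ^ (l - j)) (𝓝[>] 0) (𝓝 0) := by
    have := ((continuous_pow (l - j)).const_mul ((j ! : ℝ) * c)).tendsto 0
    rw [zero_pow (by omega), mul_zero] at this
    exact tendsto_nhdsWithin_of_tendsto_nhds this
  exact tendsto_nhds_unique (hcont.tendsto.comp hξ0)
    (squeeze_zero_norm' (hnear.mono fun t ht => hξbd t ht) hpow)

/-- The `A_k` of `deriv^[k] (u / t ^ l) = A_k / t ^ (l + k)`, see `iterate_deriv_div_pow`. -/
noncomputable def divPowNumerator (l : ℕ) (u : ℝ → ℝ) : ℕ → ℝ → ℝ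
  | 0 => u
  | k + 1 => fun t => t * deriv (divPowNumerator l u k) t - (l + k : ℝ) * divPowNumerator l u k t

theorem contDiffOn_divPowNumerator (hu : ContDiffOn ℝ ∞ u I) (hI : IsOpen I) (l : ℕ) :
    ∀ k, ContDiffOn ℝ ∞ (divPowNumerator l u k) I
  | 0 => hu
  | k + 1 => by
    have hA := contDiffOn_divPowNumerator hu hI l k
    exact (contDiffOn_id.mul (hA.deriv_of_isOpen hI (by simp))).sub (contDiffOn_const.mul hA)

theorem ContDiffOn.iterate_deriv_divPowNumerator_succ (hu : ContDiffOn ℝ ∞ u I) (hI : IsOpen I)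
    (l k : ℕ) : ∀ i : ℕ, ∀ t ∈ I, deriv^[i] (divPowNumerator l u (k + 1)) t =
      t * deriv^[i + 1] (divPowNumerator l u k) t
        + (i - (l + k) : ℝ) * deriv^[i] (divPowNumerator l u k) t
  | 0, t, _ => by
    simp only [zero_add, Function.iterate_zero, id, Function.iterate_one, divPowNumerator,
      Nat.cast_zero]
    ring
  | i + 1, t, ht => by
    set A := divPowNumerator l u k
    have hA := contDiffOn_divPowNumerator hu hI l k
    have heq : deriv^[i] (divPowNumerator l u (k + 1)) =ᶠ[𝓝 t]
        fun s => s * deriv^[i + 1] A s + (i - (l + k) : ℝ) * deriv^[i] A s :=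
      eventually_of_mem (hI.mem_nhds ht) (hu.iterate_deriv_divPowNumerator_succ hI l k i)
    rw [Function.iterate_succ_apply', heq.deriv_eq,
      (((hasDerivAt_id' t).fun_mul (hA.hasDerivAt_iterate_deriv hI (i + 1) ht)).fun_add
        ((hA.hasDerivAt_iterate_deriv hI i ht).const_mul _)).deriv]
    push_cast
    ring

theorem ContDiffOn.iterate_deriv_divPowNumerator_zero_eq_zero (hu : ContDiffOn ℝ ∞ u I)
    (hI : IsOpen I) (h0 : (0 : ℝ) ∈ I) {l : ℕ} (hvan : ∀ j < l, deriv^[j] u 0 = 0) :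
    ∀ k, ∀ i < l + k, deriv^[i] (divPowNumerator l u k) 0 = 0
  | 0, i, hi => hvan i hi
  | k + 1, i, hi => by
    have ih := hu.iterate_deriv_divPowNumerator_zero_eq_zero hI h0 hvan k
    rw [hu.iterate_deriv_divPowNumerator_succ hI l k i 0 h0, zero_mul, zero_add]
    rcases Nat.lt_or_ge i (l + k) with hlt | hge
    · rw [ih i hlt, mul_zero]
    · obtain rfl : i = l + k := by omega
      push_cast
      ring

/-- The recursion of `iterate_deriv_divPowNumerator_succ`, estimated with `|t| ≤ ε` and
`|i - (l + k)| ≤ i + l + k`. -/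
noncomputable def divPowNumeratorBound (ε : ℝ) (l : ℕ) (M : ℕ → ℝ) : ℕ → ℕ → ℝ
  | 0, i => M i
  | k + 1, i =>
    ε * divPowNumeratorBound ε l M k (i + 1) + (i + l + k) * divPowNumeratorBound ε l M k i

theorem ContDiffOn.abs_iterate_deriv_divPowNumerator_le (hu : ContDiffOn ℝ ∞ u I) (hI : IsOpen I)
    {t ε : ℝ} (ht : t ∈ I) (htε : |t| ≤ ε) {M : ℕ → ℝ} (hM : ∀ n, |deriv^[n] u t| ≤ M n)
    (l : ℕ) :
    ∀ k i, |deriv^[i] (divPowNumerator l u k) t| ≤ divPowNumeratorBound ε l M k i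
  | 0, i => hM i
  | k + 1, i => by
    have ih := hu.abs_iterate_deriv_divPowNumerator_le hI ht htε hM l k
    have hcoeff : |(i - (l + k) : ℝ)| ≤ i + l + k := by
      have hi : (0 : ℝ) ≤ i := i.cast_nonneg
      have hl : (0 : ℝ) ≤ l := l.cast_nonneg
      rw [abs_le]
      constructor <;> linarith
    rw [hu.iterate_deriv_divPowNumerator_succ hI l k i t ht, divPowNumeratorBound]
    refine (abs_add_le _ _).trans (add_le_add ?_ ?_) <;> rw [abs_mul]
    · exact mul_le_mul htε (ih (i + 1)) (abs_nonneg _) ((abs_nonneg t).trans htε)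
    · exact mul_le_mul hcoeff (ih i) (abs_nonneg _) (by positivity)

theorem ContDiffOn.iterate_deriv_div_pow (hu : ContDiffOn ℝ ∞ u I) (hI : IsOpen I) (l : ℕ) :
    ∀ k, ∀ t ∈ I, 0 < t →
      deriv^[k] (fun s => u s / s ^ l) t = divPowNumerator l u k t / t ^ (l + k)
  | 0, t, _, _ => rfl
  | k + 1, t, ht, htpos => by
    set A := divPowNumerator l u k
    have heq : deriv^[k] (fun s => u s / s ^ l) =ᶠ[𝓝 t] fun s => A s / s ^ (l + k) :=
      eventually_of_mem ((hI.inter isOpen_Ioi).mem_nhds ⟨ht, htpos⟩)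
        fun s hs => hu.iterate_deriv_div_pow hI l k s hs.1 hs.2
    have hpow : ((l + k : ℕ) : ℝ) * t ^ (l + k - 1) * t = (l + k : ℕ) * t ^ (l + k) := by
      rcases Nat.eq_zero_or_pos (l + k) with h | h
      · simp [h]
      · rw [mul_assoc, ← pow_succ, Nat.sub_add_cancel h]
    have hA : HasDerivAt A (deriv A t) t := by
      simpa using (contDiffOn_divPowNumerator hu hI l k).hasDerivAt_iterate_deriv hI 0 ht
    rw [Function.iterate_succ_apply', heq.deriv_eq,
      (hA.fun_div (hasDerivAt_pow (l + k) t) (pow_ne_zero _ htpos.ne')).deriv]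
    simp only [divPowNumerator, A]
    field_simp
    push_cast at hpow ⊢
    linear_combination (-A t * t ^ (l + k)) * hpow

theorem ContDiffOn.abs_iterate_deriv_div_pow_le
    (hu : ContDiffOn ℝ ∞ u I) (hI : IsOpen I) {ρ ε : ℝ} (hρ : 0 < ρ) (hρε : ρ ≤ ε)
    (hsub : Icc 0 ρ ⊆ I) {M : ℕ → ℝ} (hM : ∀ n, ∀ t ∈ Icc 0 ρ, |deriv^[n] u t| ≤ M n)
    {c : ℝ} {l : ℕ} (hbd : ∀ t ∈ Ioc 0 ρ, |u t| ≤ c * t ^ l) (k : ℕ) :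
    |deriv^[k] (fun t => u t / t ^ l) ρ| ≤ divPowNumeratorBound ε l M k (l + k) / (l + k)! := by
  have hρI : ρ ∈ I := hsub (right_mem_Icc.2 hρ.le)
  have hnum : |divPowNumerator l u k ρ| ≤
      divPowNumeratorBound ε l M k (l + k) * ρ ^ (l + k) / (l + k)! :=
    (contDiffOn_divPowNumerator hu hI l k).abs_le_of_iterate_deriv_eq_zero hI hρ hsub
      (hu.iterate_deriv_divPowNumerator_zero_eq_zero hI (hsub (left_mem_Icc.2 hρ.le))
        (hu.iterate_deriv_eq_zero_of_abs_le_pow hI hρ hsub hbd) k)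
      fun t ht => hu.abs_iterate_deriv_divPowNumerator_le hI (hsub ht)
        ((abs_of_nonneg ht.1).trans_le (ht.2.trans hρε)) (fun n => hM n t ht) l k (l + k)
  rw [hu.iterate_deriv_div_pow hI l k ρ hρI hρ, abs_div, abs_of_pos (pow_pos hρ _),
    div_le_iff₀ (pow_pos hρ _)]
  rwa [mul_div_right_comm] at hnum

end OneVariable

theorem iterate_pr_apply {m : ℕ} (k : ℕ) (g : ℝ × (Fin m → ℝ) → ℝ) (r : ℝ) (z : Fin m → ℝ) :
    (pr)^[k] g (r, z) = deriv^[k] (fun t => g (t, z)) r := by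
  induction k generalizing g with
  | zero => rfl
  | succ k ih => exact ih (pr g)

theorem fst_le_of_mem_Kset {m : ℕ} {ε : ℝ} {p : ℝ × (Fin m → ℝ)} (hp : p ∈ Kset m ε) :
    p.1 ≤ ε := by
  calc p.1 = √(p.1 ^ 2) := (Real.sqrt_sq hp.1).symm
    _ ≤ √(p.1 ^ 2 + ∑ i, p.2 i ^ 2) := Real.sqrt_le_sqrt (by simp; positivity)
    _ ≤ ε := hp.2

theorem mk_mem_Kset_of_mem_Icc {m : ℕ} {ε r t : ℝ} {z : Fin m → ℝ} (hp : (r, z) ∈ Kset m ε)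
    (ht : t ∈ Icc 0 r) : (t, z) ∈ Kset m ε := by
  refine ⟨ht.1, le_trans (Real.sqrt_le_sqrt ?_) hp.2⟩
  have : t ^ 2 ≤ r ^ 2 := pow_le_pow_left₀ ht.1 ht.2 2
  simpa using this

theorem stmt1_general (m : ℕ) (ε₀ : ℝ) (l : ℕ)
    (h : ℝ × (Fin m → ℝ) → ℝ)
    (U : Set (ℝ × (Fin m → ℝ))) (hU : IsOpen U) (hKU : Kset m ε₀ ⊆ U)
    (hsmooth : ContDiffOn ℝ (⊤ : ℕ∞) h U)
    (hder : ∀ (k : ℕ) (αs : List (Fin m)), ∃ c > (0 : ℝ), ∀ p ∈ Kset m ε₀,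
      |(pr)^[k] (pz αs h) p| ≤ c)
    (f : ℝ × (Fin m → ℝ) → ℝ) (hf : ∀ p : ℝ × (Fin m → ℝ), 0 < p.1 → f p = h p / p.1 ^ l)
    (c : ℝ) (hbound : ∀ p ∈ Kset m ε₀, 0 < p.1 → |f p| ≤ c) :
    ∀ k : ℕ, ∃ ck > (0 : ℝ), ∀ p ∈ Kset m ε₀, 0 < p.1 →
      |(pr)^[k] f p| ≤ ck := by
  intro k
  choose M _ hM using fun n => hder n []
  refine ⟨max (divPowNumeratorBound ε₀ l M k (l + k) / (l + k)!) 1, lt_max_of_lt_right one_pos, ?_⟩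
  rintro ⟨r, z⟩ hp (hr : 0 < r)
  have hslice : ∀ t ∈ Icc 0 r, (t, z) ∈ Kset m ε₀ := fun t => mk_mem_Kset_of_mem_Icc hp
  have hfh : (fun t => f (t, z)) =ᶠ[𝓝 r] fun t => h (t, z) / t ^ l :=
    eventually_of_mem (isOpen_Ioi.mem_nhds hr) fun t ht => hf (t, z) ht
  rw [iterate_pr_apply, hfh.iterate_deriv_eq]
  refine le_max_of_le_left <| ContDiffOn.abs_iterate_deriv_div_pow_le (c := c)
    (hsmooth.comp (by fun_prop) (mapsTo_preimage _ U)) (hU.preimage (by fun_prop)) hr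
    (fst_le_of_mem_Kset hp) (fun t ht => hKU (hslice t ht)) (fun n t ht => ?_) (fun t ht => ?_) k
  · have := hM n (t, z) (hslice t ht)
    rwa [iterate_pr_apply] at this
  · have htl : 0 < t ^ l := pow_pos ht.1 l
    have := hbound (t, z) (hslice t (Ioc_subset_Icc_self ht)) ht.1
    rwa [hf (t, z) ht.1, abs_div, abs_of_pos htl, div_le_iff₀ htl] at this

theorem stmt1 (m : ℕ) (ε₀ : ℝ) (hε₀ : 0 < ε₀) (l : ℕ) (hl : 1 ≤ l)
    (h : ℝ × (Fin m → ℝ) → ℝ)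
    (U : Set (ℝ × (Fin m → ℝ))) (hU : IsOpen U) (hKU : Kset m ε₀ ⊆ U)
    (hsmooth : ContDiffOn ℝ (⊤ : ℕ∞) h U)
    (hder : ∀ (k : ℕ) (αs : List (Fin m)), ∃ c > (0 : ℝ), ∀ p ∈ Kset m ε₀,
      |(pr)^[k] (pz αs h) p| ≤ c)
    (f : ℝ × (Fin m → ℝ) → ℝ) (hf : ∀ p : ℝ × (Fin m → ℝ), 0 < p.1 → f p = h p / p.1 ^ l)
    (c : ℝ) (hc : 0 < c) (hbound : ∀ p ∈ Kset m ε₀, 0 < p.1 → |f p| ≤ c) :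
    ∀ k : ℕ, ∃ ck > (0 : ℝ), ∀ p ∈ Kset m ε₀, 0 < p.1 →
      |(pr)^[k] f p| ≤ ck :=
  stmt1_general m ε₀ l h U hU hKU hsmooth hder f hf c hbound
end

section
/- Let m ∈ ℕ, ε̂ > 0, and let ω = (ω¹, ω²) : ℝ² × ℝ^m → ℝ² be smooth on an open neighborhood of the closed ball B̄ of radius ε̂ centered at the origin of ℝ^{2+m}, with ω(0,0,z) = 0 for every z with (0,0,z) ∈ B̄. Fix b ∈ ℝ, let A : ℝ² → ℝ² be the linear map with matrix (∂_{y_j}ω^i(0,0,0))_{i,j=1,2}, and write (a₁, a₂) = A(cos b, sin b). If a₁ ≠ 0, then there exist ε₀ ∈ (0, ε̂] and C > 0 such that for all r > 0 and z ∈ ℝ^m with (r² + |z|²)^{1/2} ≤ ε₀: ω¹(r·cos b, r·sin b, z) ≠ 0 and |arctan(ω²(r·cos b, r·sin b, z)/ω¹(r·cos b, r·sin b, z)) − arctan(a₂/a₁)| ≤ C·(|z| + r). -/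
/-!
Along the ray `y = r (cos b, sin b)` at fixed `z`, the vanishing `ω(0, 0, z) = 0` and the mean value
inequality for `ω - Dω(0)`, whose derivative is Lipschitz near the origin, give
`ω(r cos b, r sin b, z) = r (a₁, a₂) + O(r (r + |z|))`. Once the error is below `r |a₁| / 2`, the
quotient `ω² / ω¹` is `a₂ / a₁ + O(r + |z|)`, and `arctan` is `1`-Lipschitz.
-/

/-- The closed ball of radius `ε` centered at the origin of `ℝ^{2+m}`
(Euclidean norm), with points written `(y₁, y₂, z)`. -/
def Bball (m : ℕ) (ε : ℝ) : Set (ℝ × ℝ × (Fin m → ℝ)) :=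
  {p | Real.sqrt (p.1 ^ 2 + p.2.1 ^ 2 + ∑ i, p.2.2 i ^ 2) ≤ ε}

open Real Metric Topology

section
variable {E F : Type*} [NormedAddCommGroup E] [NormedSpace ℝ E]
  [NormedAddCommGroup F] [NormedSpace ℝ F]

lemma ContDiffAt.exists_norm_sub_sub_fderiv_le {f : E → F} {x₀ : E} (hf : ContDiffAt ℝ 2 f x₀) :
    ∃ δ > 0, ∃ M ≥ 0, ∀ s ≤ δ, ∀ x ∈ closedBall x₀ s, ∀ y ∈ closedBall x₀ s,
      ‖f y - f x - fderiv ℝ f x₀ (y - x)‖ ≤ M * s * ‖y - x‖ := by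
  obtain ⟨K, t, ht, hK⟩ := (hf.fderiv_right (m := 1) le_rfl).exists_lipschitzOnWith
  have hdiff : ∀ᶠ x in 𝓝 x₀, DifferentiableAt ℝ f x :=
    (hf.eventually (by simp)).mono fun x hx => hx.differentiableAt (by simp)
  obtain ⟨δ, hδ, hball⟩ := nhds_basis_closedBall.mem_iff.1 (Filter.inter_mem ht hdiff)
  refine ⟨δ, hδ, K, K.2, fun s hs x hx y hy => ?_⟩
  have hsub : closedBall x₀ s ⊆ closedBall x₀ δ := closedBall_subset_closedBall hs
  refine (convex_closedBall x₀ s).norm_image_sub_le_of_norm_fderiv_le'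
    (fun z hz => (hball (hsub hz)).2) (fun z hz => ?_) hx hy
  calc ‖fderiv ℝ f z - fderiv ℝ f x₀‖ ≤ K * ‖z - x₀‖ :=
        hK.norm_sub_le (hball (hsub hz)).1 (mem_of_mem_nhds ht)
    _ ≤ K * s := by gcongr; exact mem_closedBall_iff_norm.1 hz

variable {G : Type*} [NormedAddCommGroup G] [NormedSpace ℝ G]

lemma fderiv_apply_prod_eq_deriv {f : ℝ × ℝ × G → F} (hf : DifferentiableAt ℝ f 0) (x y : ℝ) :
    fderiv ℝ f 0 (x, y, 0) =
      x • deriv (fun t => f (t, 0, 0)) 0 + y • deriv (fun t => f (0, t, 0)) 0 := by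
  have h₁ : HasDerivAt (fun t : ℝ => ((t, 0, 0) : ℝ × ℝ × G)) (1, 0, 0) 0 :=
    (hasDerivAt_id 0).prodMk ((hasDerivAt_const 0 0).prodMk (hasDerivAt_const 0 0))
  have h₂ : HasDerivAt (fun t : ℝ => ((0, t, 0) : ℝ × ℝ × G)) (0, 1, 0) 0 :=
    (hasDerivAt_const 0 0).prodMk ((hasDerivAt_id 0).prodMk (hasDerivAt_const 0 0))
  have d₁ : HasDerivAt (fun t => f (t, 0, 0)) (fderiv ℝ f 0 (1, 0, 0)) 0 :=
    hf.hasFDerivAt.comp_hasDerivAt_of_eq 0 h₁ rfl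
  have d₂ : HasDerivAt (fun t => f (0, t, 0)) (fderiv ℝ f 0 (0, 1, 0)) 0 :=
    hf.hasFDerivAt.comp_hasDerivAt_of_eq 0 h₂ rfl
  rw [d₁.deriv, d₂.deriv, ← map_smul, ← map_smul, ← map_add]
  congr 1
  simp

lemma ContDiffAt.exists_abs_apply_ray_sub_le {ω : ℝ × ℝ × G → ℝ} (hω : ContDiffAt ℝ 2 ω 0)
    (b : ℝ) :
    ∃ δ > 0, ∃ M ≥ 0, ∀ (r : ℝ) (z : G), 0 ≤ r → r + ‖z‖ ≤ δ → ω (0, 0, z) = 0 →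
      |ω (r * Real.cos b, r * Real.sin b, z) - r * (deriv (fun t => ω (t, 0, 0)) 0 * Real.cos b +
        deriv (fun t => ω (0, t, 0)) 0 * Real.sin b)| ≤ M * (r + ‖z‖) * r := by
  obtain ⟨δ, hδ, M, hM, hω'⟩ := hω.exists_norm_sub_sub_fderiv_le
  refine ⟨δ, hδ, M, hM, fun r z hr hrz hz => ?_⟩
  have hcos : |r * Real.cos b| ≤ r := by
    rw [abs_mul, abs_of_nonneg hr]; exact mul_le_of_le_one_right hr (abs_cos_le_one b)
  have hsin : |r * Real.sin b| ≤ r := by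
    rw [abs_mul, abs_of_nonneg hr]; exact mul_le_of_le_one_right hr (abs_sin_le_one b)
  have hray : ‖((r * Real.cos b, r * Real.sin b, 0) : ℝ × ℝ × G)‖ ≤ r := by
    simp only [norm_prod_le_iff, Real.norm_eq_abs, norm_zero]
    exact ⟨hcos, hsin, hr⟩
  have hx : ((0, 0, z) : ℝ × ℝ × G) ∈ closedBall 0 (r + ‖z‖) := by
    simp only [mem_closedBall_zero_iff, norm_prod_le_iff, norm_zero]
    exact ⟨by positivity, by positivity, le_add_of_nonneg_left hr⟩
  have hy : ((r * Real.cos b, r * Real.sin b, z) : ℝ × ℝ × G) ∈ closedBall 0 (r + ‖z‖) := by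
    simp only [mem_closedBall_zero_iff, norm_prod_le_iff, Real.norm_eq_abs]
    exact ⟨by linarith [norm_nonneg z], by linarith [norm_nonneg z], le_add_of_nonneg_left hr⟩
  have key := hω' _ hrz _ hx _ hy
  have hsub : ((r * Real.cos b, r * Real.sin b, z) : ℝ × ℝ × G) - (0, 0, z) =
      (r * Real.cos b, r * Real.sin b, 0) := by
    simp
  rw [hsub, fderiv_apply_prod_eq_deriv (hω.differentiableAt (by simp)), hz, sub_zero,
    Real.norm_eq_abs, smul_eq_mul, smul_eq_mul] at key
  calc _ = |ω (r * Real.cos b, r * Real.sin b, z) -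
          (r * Real.cos b * deriv (fun t => ω (t, 0, 0)) 0 +
            r * Real.sin b * deriv (fun t => ω (0, t, 0)) 0)| := by ring_nf
    _ ≤ M * (r + ‖z‖) * ‖((r * Real.cos b, r * Real.sin b, 0) : ℝ × ℝ × G)‖ := key
    _ ≤ M * (r + ‖z‖) * r := by gcongr

end

lemma Real.abs_arctan_sub_arctan_le (x y : ℝ) : |arctan x - arctan y| ≤ |x - y| := by
  refine Convex.norm_image_sub_le_of_norm_deriv_le (C := 1) (fun t _ => differentiable_arctan t)
    (fun t _ => ?_) convex_univ (Set.mem_univ y) (Set.mem_univ x) |>.trans_eq (one_mul _)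
  rw [deriv_arctan, norm_div, norm_one, Real.norm_of_nonneg (by positivity)]
  exact div_le_one_of_le₀ (by nlinarith) (by positivity)

lemma abs_arctan_div_sub_le_of_abs_sub_mul_le {u v a₁ a₂ r e : ℝ} (ha : a₁ ≠ 0) (hr : 0 < r)
    (hu : |u - r * a₁| ≤ e * r) (hv : |v - r * a₂| ≤ e * r) (he : 2 * e ≤ |a₁|) :
    u ≠ 0 ∧ |arctan (v / u) - arctan (a₂ / a₁)| ≤ 2 * (|a₁| + |a₂|) / a₁ ^ 2 * e := by
  have he0 : 0 ≤ e := nonneg_of_mul_nonneg_left ((abs_nonneg _).trans hu) hr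
  have hu_low : |a₁| * r / 2 ≤ |u| := by
    have h := abs_sub_abs_le_abs_sub (r * a₁) u
    rw [abs_sub_comm, abs_mul, abs_of_pos hr] at h
    nlinarith
  have hu0 : u ≠ 0 := by
    rintro rfl
    have := abs_pos.2 ha
    rw [abs_zero] at hu_low
    nlinarith
  refine ⟨hu0, (abs_arctan_sub_arctan_le _ _).trans ?_⟩
  have hnum : |v * a₁ - u * a₂| ≤ e * r * (|a₁| + |a₂|) :=
    calc |v * a₁ - u * a₂| = |(v - r * a₂) * a₁ - (u - r * a₁) * a₂| := by ring_nf
      _ ≤ |v - r * a₂| * |a₁| + |u - r * a₁| * |a₂| :=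
          (abs_sub _ _).trans_eq (by rw [abs_mul, abs_mul])
      _ ≤ e * r * |a₁| + e * r * |a₂| := by gcongr
      _ = e * r * (|a₁| + |a₂|) := by ring
  have hden : a₁ ^ 2 * r / 2 ≤ |u * a₁| := by
    rw [abs_mul, ← sq_abs a₁]
    nlinarith [abs_nonneg a₁]
  rw [div_sub_div _ _ hu0 ha, abs_div]
  calc _ ≤ e * r * (|a₁| + |a₂|) / (a₁ ^ 2 * r / 2) :=
        div_le_div₀ (by positivity) hnum (by positivity) hden
    _ = 2 * (|a₁| + |a₂|) / a₁ ^ 2 * e := by field_simp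

lemma norm_le_sqrt_sum_sq {ι : Type*} [Fintype ι] (z : ι → ℝ) : ‖z‖ ≤ √(∑ i, z i ^ 2) :=
  (pi_norm_le_iff_of_nonneg (sqrt_nonneg _)).2 fun i =>
    abs_le_sqrt (Finset.single_le_sum (f := fun i => z i ^ 2) (fun _ _ => sq_nonneg _)
      (Finset.mem_univ i))

theorem stmt6 (m : ℕ) (εhat : ℝ) (hε : 0 < εhat)
    (ω₁ ω₂ : ℝ × ℝ × (Fin m → ℝ) → ℝ)
    (U : Set (ℝ × ℝ × (Fin m → ℝ))) (hU : IsOpen U) (hBU : Bball m εhat ⊆ U)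
    (hsmooth₁ : ContDiffOn ℝ (⊤ : ℕ∞) ω₁ U) (hsmooth₂ : ContDiffOn ℝ (⊤ : ℕ∞) ω₂ U)
    (hvanish : ∀ z : Fin m → ℝ, ((0 : ℝ), (0 : ℝ), z) ∈ Bball m εhat →
      ω₁ (0, 0, z) = 0 ∧ ω₂ (0, 0, z) = 0)
    (b : ℝ) (a₁ a₂ : ℝ)
    -- `(a₁, a₂) = A (cos b, sin b)` where `A` is the Jacobian matrix of `ω` in `y` at the origin
    (ha₁ : a₁ = deriv (fun t => ω₁ (t, 0, fun _ => 0)) 0 * Real.cos b +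
        deriv (fun t => ω₁ (0, t, fun _ => 0)) 0 * Real.sin b)
    (ha₂ : a₂ = deriv (fun t => ω₂ (t, 0, fun _ => 0)) 0 * Real.cos b +
        deriv (fun t => ω₂ (0, t, fun _ => 0)) 0 * Real.sin b)
    (ha₁ne : a₁ ≠ 0) :
    ∃ ε₀ : ℝ, 0 < ε₀ ∧ ε₀ ≤ εhat ∧ ∃ C > (0 : ℝ),
      ∀ (r : ℝ) (z : Fin m → ℝ), 0 < r →
        Real.sqrt (r ^ 2 + ∑ i, z i ^ 2) ≤ ε₀ →
        ω₁ (r * Real.cos b, r * Real.sin b, z) ≠ 0 ∧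
        |Real.arctan (ω₂ (r * Real.cos b, r * Real.sin b, z) /
              ω₁ (r * Real.cos b, r * Real.sin b, z)) - Real.arctan (a₂ / a₁)| ≤
          C * (Real.sqrt (∑ i, z i ^ 2) + r) := by
  have h0U : (0 : ℝ × ℝ × (Fin m → ℝ)) ∈ U := hBU (by simp [Bball, hε.le])
  have hω_at {ω : ℝ × ℝ × (Fin m → ℝ) → ℝ} (h : ContDiffOn ℝ (⊤ : ℕ∞) ω U) : ContDiffAt ℝ 2 ω 0 :=
    (h.contDiffAt (hU.mem_nhds h0U)).of_le (WithTop.coe_le_coe.2 le_top)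
  obtain ⟨δ₁, hδ₁, M₁, hM₁, hray₁⟩ := (hω_at hsmooth₁).exists_abs_apply_ray_sub_le b
  obtain ⟨δ₂, hδ₂, M₂, hM₂, hray₂⟩ := (hω_at hsmooth₂).exists_abs_apply_ray_sub_le b
  set M := max M₁ M₂
  set K := 2 * (|a₁| + |a₂|) / a₁ ^ 2
  set ε₀ := min (min εhat (δ₁ / 2)) (min (δ₂ / 2) (|a₁| / (4 * (M + 1))))
  have hM : 0 ≤ M := hM₁.trans (le_max_left _ _)
  refine ⟨ε₀, by positivity, (min_le_left _ _).trans (min_le_left _ _), K * M + 1, by positivity,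
    fun r z hr hrz => ?_⟩
  set nz := √(∑ i, z i ^ 2)
  have hr_le : r ≤ ε₀ :=
    (Real.le_sqrt_of_sq_le (le_add_of_nonneg_right (by positivity))).trans hrz
  have hnz_le : nz ≤ ε₀ := (Real.sqrt_le_sqrt (by nlinarith)).trans hrz
  have hz : ‖z‖ ≤ nz := norm_le_sqrt_sum_sq z
  have hvan := hvanish z <| by
    simpa [Bball] using hnz_le.trans ((min_le_left _ _).trans (min_le_left _ _))
  have hδ₁' : ε₀ ≤ δ₁ / 2 := (min_le_left _ _).trans (min_le_right _ _)
  have hδ₂' : ε₀ ≤ δ₂ / 2 := (min_le_right _ _).trans (min_le_left _ _)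
  have ha₁' : ε₀ * (4 * (M + 1)) ≤ |a₁| :=
    (le_div_iff₀ (by positivity)).1 ((min_le_right _ _).trans (min_le_right _ _))
  have hu : |ω₁ (r * Real.cos b, r * Real.sin b, z) - r * a₁| ≤ M * (r + nz) * r := by
    rw [ha₁]
    exact (hray₁ r z hr.le (by linarith) hvan.1).trans (by gcongr; exact le_max_left _ _)
  have hv : |ω₂ (r * Real.cos b, r * Real.sin b, z) - r * a₂| ≤ M * (r + nz) * r := by
    rw [ha₂]
    exact (hray₂ r z hr.le (by linarith) hvan.2).trans (by gcongr; exact le_max_right _ _)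
  obtain ⟨hne, hquot⟩ :=
    abs_arctan_div_sub_le_of_abs_sub_mul_le ha₁ne hr hu hv (by nlinarith)
  refine ⟨hne, hquot.trans ?_⟩
  calc K * (M * (r + nz)) = K * M * (nz + r) := by ring
    _ ≤ (K * M + 1) * (nz + r) := by gcongr; linarith
end

section
/- Let m ∈ ℕ, b ∈ ℝ. Then there exists C > 0, depending only on b, such that the following holds. Let ε₀ ∈ (0, 1/2], and let Φ', R' : (0,∞) × ℝ^m → ℝ be continuous functions with |Φ'(r,z)| ≤ ε₀ and |R'(r,z)| ≤ ε₀·r for all r > 0 and z ∈ ℝ^m. Then for every continuously differentiable function W : ℝ × (0,∞) × ℝ^m → ℝ with compact support, ∫_{ℝ^m} ∫_0^∞ ∫_ℝ r^{2b} |W(φ, r, z) − W(φ + Φ'(r,z), r + R'(r,z), z)|² · r dφ dr dz ≤ C·ε₀² · [ ∫_{ℝ^m} ∫_0^∞ ∫_ℝ r^{2b} |W(φ,r,z)|² · r dφ dr dz + ∫_{ℝ^m} ∫_0^∞ ∫_ℝ r^{2(b+1)} ( |r^{-1} ∂_φ W(φ,r,z)|² + |∂_r W(φ,r,z)|² + |∇_z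 W(φ,r,z)|² ) · r dφ dr dz ]. -/
open MeasureTheory

/-- Partial derivative in the angular variable `φ` of a function `W(φ, r, z)`. -/
noncomputable def dphi {m : ℕ} (W : ℝ × ℝ × (Fin m → ℝ) → ℝ) :
    ℝ × ℝ × (Fin m → ℝ) → ℝ :=
  fun p => deriv (fun t => W (t, p.2.1, p.2.2)) p.1

/-- Partial derivative in the radial variable `r` of a function `W(φ, r, z)`. -/
noncomputable def dr {m : ℕ} (W : ℝ × ℝ × (Fin m → ℝ) → ℝ) :
    ℝ × ℝ × (Fin m → ℝ) → ℝ :=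
  fun p => deriv (fun t => W (p.1, t, p.2.2)) p.2.1

/-- Partial derivative in the variable `z ξ` of a function `W(φ, r, z)`. -/
noncomputable def dz {m : ℕ} (ξ : Fin m) (W : ℝ × ℝ × (Fin m → ℝ) → ℝ) :
    ℝ × ℝ × (Fin m → ℝ) → ℝ :=
  fun p => deriv (fun t => W (p.1, p.2.1, Function.update p.2.2 ξ t)) (p.2.2 ξ)

/-!
Fix `z`. By the fundamental theorem of calculus and Cauchy–Schwarz, a `C¹` function satisfies
`|f y - f x|² ≤ δ ∫_{[x-δ, x+δ]} |f'|²` whenever `|y - x| ≤ δ`. The shift is split into an angular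
step of size at most `ε₀` and a radial step of size at most `ε₀ r`. Integrating the angular
estimate in `φ` and exchanging the integrals gives `2ε₀² ∫ |∂_φ W|²`. For the radial step the
window `[(1 - ε₀) r, (1 + ε₀) r]` only contains radii `v` with `v / 2 ≤ r ≤ 2v`, so exchanging the
`r`- and `v`-integrals turns the weight `ε₀ r^{2b+2}` into at most `4 · 2^{|2b+2|} ε₀² v^{2b+3}`.

All estimates are made for iterated lower Lebesgue integrals, where Tonelli's theorem needs no
integrability; the compact support of `W` in `{r > 0}` is used only to identify the final iterated
lower integral with the Bochner integral on the right-hand side.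
-/

open Set

lemma enorm_sq_eq_ofReal_sq (x : ℝ) : ‖x‖ₑ ^ 2 = ENNReal.ofReal (x ^ 2) := by
  rw [← ofReal_norm, ← ENNReal.ofReal_pow (norm_nonneg _), Real.norm_eq_abs, sq_abs]

lemma enorm_add_sq_le (x y : ℝ) : ‖x + y‖ₑ ^ 2 ≤ 2 * (‖x‖ₑ ^ 2 + ‖y‖ₑ ^ 2) := by
  rw [enorm_sq_eq_ofReal_sq, enorm_sq_eq_ofReal_sq, enorm_sq_eq_ofReal_sq,
    ← ENNReal.ofReal_add (sq_nonneg _) (sq_nonneg _), ← ENNReal.ofReal_ofNat 2,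
    ← ENNReal.ofReal_mul zero_le_two]
  exact ENNReal.ofReal_le_ofReal add_sq_le

lemma sq_lintegral_le_measure_univ_mul_lintegral_sq {α : Type*} [MeasurableSpace α]
    {μ : Measure α} {h : α → ENNReal} (hh : AEMeasurable h μ) :
    (∫⁻ x, h x ∂μ) ^ 2 ≤ μ univ * ∫⁻ x, h x ^ 2 ∂μ := by
  have hHolder := ENNReal.lintegral_mul_norm_pow_le (μ := μ) (f := fun _ => 1)
    (g := fun x => h x ^ 2) aemeasurable_const (hh.pow_const 2) (p := 1/2) (q := 1/2)
    (by norm_num) (by norm_num) (by norm_num)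
  have hsq : ∀ x, (h x ^ 2) ^ (1/2 : ℝ) = h x := fun x => by
    rw [← ENNReal.rpow_natCast, ← ENNReal.rpow_mul]; norm_num
  simp only [ENNReal.one_rpow, one_mul, lintegral_const, hsq] at hHolder
  calc (∫⁻ x, h x ∂μ) ^ 2 ≤ ((μ univ) ^ (1/2 : ℝ) * (∫⁻ x, h x ^ 2 ∂μ) ^ (1/2 : ℝ)) ^ 2 := by
        gcongr
    _ = μ univ * ∫⁻ x, h x ^ 2 ∂μ := by
        rw [mul_pow, ← ENNReal.rpow_natCast, ← ENNReal.rpow_natCast, ← ENNReal.rpow_mul,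
          ← ENNReal.rpow_mul]; norm_num

lemma enorm_sub_le_setLIntegral_uIoc {f : ℝ → ℝ} (hf : ContDiff ℝ 1 f) (x y : ℝ) :
    ‖f y - f x‖ₑ ≤ ∫⁻ t in uIoc x y, ‖deriv f t‖ₑ := by
  have hftc : ∫ t in x..y, deriv f t = f y - f x :=
    intervalIntegral.integral_eq_sub_of_hasDerivAt
      (fun t _ => (hf.differentiable one_ne_zero t).hasDerivAt)
      ((hf.continuous_deriv le_rfl).intervalIntegrable _ _)
  rw [← hftc, ← ofReal_norm, intervalIntegral.norm_integral_eq_norm_integral_uIoc, ofReal_norm]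
  exact enorm_integral_le_lintegral_enorm _

lemma enorm_sub_sq_le_setLIntegral_Icc {f : ℝ → ℝ} (hf : ContDiff ℝ 1 f) {x y δ : ℝ}
    (hxy : |y - x| ≤ δ) :
    ‖f y - f x‖ₑ ^ 2 ≤ ENNReal.ofReal δ * ∫⁻ t in Icc (x - δ) (x + δ), ‖deriv f t‖ₑ ^ 2 := by
  have hsub : uIoc x y ⊆ Icc (x - δ) (x + δ) := by
    intro t ht
    rcases mem_uIoc.1 ht with ⟨h1, h2⟩ | ⟨h1, h2⟩ <;>
      constructor <;> linarith [abs_le.1 hxy]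
  calc ‖f y - f x‖ₑ ^ 2 ≤ (∫⁻ t in uIoc x y, ‖deriv f t‖ₑ) ^ 2 := by
        gcongr; exact enorm_sub_le_setLIntegral_uIoc hf x y
    _ ≤ volume (uIoc x y) * ∫⁻ t in uIoc x y, ‖deriv f t‖ₑ ^ 2 := by
        simpa using sq_lintegral_le_measure_univ_mul_lintegral_sq
          (hf.continuous_deriv le_rfl).enorm.aemeasurable (μ := volume.restrict (uIoc x y))
    _ ≤ ENNReal.ofReal δ * ∫⁻ t in Icc (x - δ) (x + δ), ‖deriv f t‖ₑ ^ 2 := by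
        rw [Real.volume_uIoc]
        gcongr

lemma lintegral_mul_setLIntegral_preimage_comm {α β : Type*} [MeasurableSpace α]
    [MeasurableSpace β] {μ : Measure α} {ν : Measure β} [SFinite μ] [SFinite ν]
    {S : Set (α × β)} (hS : MeasurableSet S) {k : α → ENNReal} {g : β → ENNReal}
    (hk : Measurable k) (hg : Measurable g) :
    ∫⁻ x, k x * ∫⁻ y in Prod.mk x ⁻¹' S, g y ∂ν ∂μ
      = ∫⁻ y, g y * ∫⁻ x in (fun x => (x, y)) ⁻¹' S, k x ∂μ ∂ν := by
  have hind : Measurable (S.indicator fun p : α × β => k p.1 * g p.2) :=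
    ((hk.comp measurable_fst).mul (hg.comp measurable_snd)).indicator hS
  calc ∫⁻ x, k x * ∫⁻ y in Prod.mk x ⁻¹' S, g y ∂ν ∂μ
      = ∫⁻ x, ∫⁻ y, S.indicator (fun p => k p.1 * g p.2) (x, y) ∂ν ∂μ := by
        refine lintegral_congr fun x => ?_
        rw [← lintegral_indicator (measurable_prodMk_left hS),
          ← lintegral_const_mul _ (hg.indicator (measurable_prodMk_left hS))]
        refine lintegral_congr fun y => ?_
        by_cases h : (x, y) ∈ S <;> simp [indicator, h]
    _ = ∫⁻ y, ∫⁻ x, S.indicator (fun p => k p.1 * g p.2) (x, y) ∂μ ∂ν :=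
        lintegral_lintegral_swap hind.aemeasurable
    _ = ∫⁻ y, g y * ∫⁻ x in (fun x => (x, y)) ⁻¹' S, k x ∂μ ∂ν := by
        refine lintegral_congr fun y => ?_
        rw [← lintegral_indicator (measurable_prodMk_right hS),
          ← lintegral_const_mul _ (hk.indicator (measurable_prodMk_right hS))]
        refine lintegral_congr fun x => ?_
        by_cases h : (x, y) ∈ S <;> simp [indicator, h, mul_comm]

lemma measurableSet_window {a b : ℝ → ℝ} (ha : Measurable a) (hb : Measurable b) :
    MeasurableSet {p : ℝ × ℝ | p.2 ∈ Icc (a p.1) (b p.1)} :=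
  (measurableSet_le (ha.comp measurable_fst) measurable_snd).inter
    (measurableSet_le measurable_snd (hb.comp measurable_fst))

lemma lintegral_enorm_sub_comp_add_sq_le {f : ℝ → ℝ} (hf : ContDiff ℝ 1 f) (s : ℝ) :
    ∫⁻ x, ‖f (x + s) - f x‖ₑ ^ 2 ≤ ENNReal.ofReal (2 * s ^ 2) * ∫⁻ x, ‖deriv f x‖ₑ ^ 2 := by
  have hg : Measurable fun t => ‖deriv f t‖ₑ ^ 2 :=
    (hf.continuous_deriv le_rfl).measurable.enorm.pow_const 2
  have hslice : ∀ t, (fun x => (x, t)) ⁻¹' {p : ℝ × ℝ | p.2 ∈ Icc (p.1 - |s|) (p.1 + |s|)}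
      = Icc (t - |s|) (t + |s|) := fun t => by
    ext x; simp only [mem_preimage, mem_ofPred_eq, mem_Icc]
    constructor <;> intro h <;> constructor <;> linarith [h.1, h.2]
  have hwindow : ∀ t, ∫⁻ _ in Icc (t - |s|) (t + |s|), ENNReal.ofReal |s|
      = ENNReal.ofReal (2 * s ^ 2) := fun t => by
    rw [setLIntegral_const, Real.volume_Icc, ← ENNReal.ofReal_mul (abs_nonneg s), ← sq_abs s]
    ring_nf
  calc ∫⁻ x, ‖f (x + s) - f x‖ₑ ^ 2
      ≤ ∫⁻ x, ENNReal.ofReal |s| * ∫⁻ t in Icc (x - |s|) (x + |s|), ‖deriv f t‖ₑ ^ 2 :=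
        lintegral_mono fun x => enorm_sub_sq_le_setLIntegral_Icc hf (by simp)
    _ = ∫⁻ t, ‖deriv f t‖ₑ ^ 2 * ∫⁻ _ in Icc (t - |s|) (t + |s|), ENNReal.ofReal |s| := by
        have hswap := lintegral_mul_setLIntegral_preimage_comm (μ := volume) (ν := volume)
          (measurableSet_window (a := fun x => x - |s|) (b := fun x => x + |s|) (by fun_prop)
            (by fun_prop)) (measurable_const (a := ENNReal.ofReal |s|)) hg
        simp only [hslice] at hswap
        exact hswap
    _ = ENNReal.ofReal (2 * s ^ 2) * ∫⁻ x, ‖deriv f x‖ₑ ^ 2 := by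
        simp only [hwindow]
        rw [lintegral_mul_const' _ _ ENNReal.ofReal_ne_top, mul_comm]

lemma rpow_le_two_rpow_abs_mul_rpow {c r v : ℝ} (hv : 0 < v) (hr : r ∈ Icc (v / 2) (2 * v)) :
    r ^ c ≤ 2 ^ |c| * v ^ c := by
  have hr0 : 0 < r := by linarith [hr.1]
  have hratio : (r / v) ^ c ≤ 2 ^ |c| := by
    rcases le_or_gt 0 c with hc | hc
    · rw [abs_of_nonneg hc]
      exact Real.rpow_le_rpow (by positivity) ((div_le_iff₀ hv).2 hr.2) hc
    · rw [abs_of_neg hc, Real.rpow_neg zero_le_two, ← Real.inv_rpow zero_le_two]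
      exact Real.rpow_le_rpow_of_nonpos (by positivity) ((le_div_iff₀ hv).2 (by linarith [hr.1]))
        hc.le
  calc r ^ c = (r / v) ^ c * v ^ c := by
        rw [Real.div_rpow hr0.le hv.le, div_mul_cancel₀ _ (Real.rpow_pos_of_pos hv c).ne']
    _ ≤ 2 ^ |c| * v ^ c := by gcongr

lemma mem_Icc_of_mem_dilation_window {ε r v : ℝ} (hε : 0 < ε) (hε2 : ε ≤ 1 / 2) (hr : 0 < r)
    (hv : v ∈ Icc (r - ε * r) (r + ε * r)) :
    0 < v ∧ r ∈ Icc (v / 2) (2 * v) ∧ r ∈ Icc (v - 2 * ε * v) (v + 2 * ε * v) := by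
  obtain ⟨h1, h2⟩ := hv
  have hv0 : 0 < v := by nlinarith
  refine ⟨hv0, ⟨by nlinarith, by nlinarith⟩, by nlinarith, by nlinarith⟩

lemma setLIntegral_rpow_dilation_window_le {c ε : ℝ} (hε : 0 < ε) (hε2 : ε ≤ 1 / 2) (v : ℝ) :
    ∫⁻ r in {r | v ∈ Icc (r - ε * r) (r + ε * r)} ∩ Ioi 0, ENNReal.ofReal (r ^ c)
      ≤ (Ioi 0).indicator (fun v => ENNReal.ofReal (4 * 2 ^ |c| * ε * v ^ (c + 1))) v := by
  by_cases hv : 0 < v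
  · have hT : MeasurableSet ({r | v ∈ Icc (r - ε * r) (r + ε * r)} ∩ Ioi 0) :=
      (measurable_prodMk_right (measurableSet_window (a := fun r => r - ε * r)
        (b := fun r => r + ε * r) (by fun_prop) (by fun_prop))).inter measurableSet_Ioi
    rw [indicator_of_mem (mem_Ioi.2 hv)]
    calc ∫⁻ r in {r | v ∈ Icc (r - ε * r) (r + ε * r)} ∩ Ioi 0, ENNReal.ofReal (r ^ c)
        ≤ ∫⁻ _ in {r | v ∈ Icc (r - ε * r) (r + ε * r)} ∩ Ioi 0,
            ENNReal.ofReal (2 ^ |c| * v ^ c) :=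
          setLIntegral_mono' hT fun r ⟨hrv, hr⟩ => ENNReal.ofReal_le_ofReal
            (rpow_le_two_rpow_abs_mul_rpow hv (mem_Icc_of_mem_dilation_window hε hε2 hr hrv).2.1)
      _ ≤ ∫⁻ _ in Icc (v - 2 * ε * v) (v + 2 * ε * v), ENNReal.ofReal (2 ^ |c| * v ^ c) :=
          lintegral_mono_set fun r ⟨hrv, hr⟩ =>
            (mem_Icc_of_mem_dilation_window hε hε2 hr hrv).2.2
      _ = ENNReal.ofReal (4 * 2 ^ |c| * ε * v ^ (c + 1)) := by
          rw [setLIntegral_const, Real.volume_Icc, ← ENNReal.ofReal_mul (by positivity),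
            Real.rpow_add_one hv.ne']
          ring_nf
  · have hempty : {r | v ∈ Icc (r - ε * r) (r + ε * r)} ∩ Ioi 0 = ∅ :=
      eq_empty_of_forall_notMem fun r ⟨hrv, hr⟩ =>
        hv (mem_Icc_of_mem_dilation_window hε hε2 hr hrv).1
    rw [hempty]
    simp

lemma setLIntegral_rpow_mul_setLIntegral_window_le {c ε : ℝ} (hε : 0 < ε) (hε2 : ε ≤ 1 / 2)
    {F : ℝ → ENNReal} (hF : Measurable F) :
    ∫⁻ r in Ioi 0, ENNReal.ofReal (r ^ c) * ∫⁻ v in Icc (r - ε * r) (r + ε * r), F v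
      ≤ ENNReal.ofReal (4 * 2 ^ |c| * ε) * ∫⁻ v in Ioi 0, ENNReal.ofReal (v ^ (c + 1)) * F v := by
  have hS : MeasurableSet {p : ℝ × ℝ | p.2 ∈ Icc (p.1 - ε * p.1) (p.1 + ε * p.1)} :=
    measurableSet_window (a := fun r => r - ε * r) (b := fun r => r + ε * r) (by fun_prop)
      (by fun_prop)
  calc ∫⁻ r in Ioi 0, ENNReal.ofReal (r ^ c) * ∫⁻ v in Icc (r - ε * r) (r + ε * r), F v
      = ∫⁻ v, F v * ∫⁻ r in {r | v ∈ Icc (r - ε * r) (r + ε * r)} ∩ Ioi 0,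
          ENNReal.ofReal (r ^ c) := by
        refine (lintegral_mul_setLIntegral_preimage_comm hS (by fun_prop) hF).trans ?_
        simp only [Measure.restrict_restrict (measurable_prodMk_right hS)]
        rfl
    _ ≤ ∫⁻ v, (Ioi 0).indicator
          (fun v => F v * ENNReal.ofReal (4 * 2 ^ |c| * ε * v ^ (c + 1))) v := by
        refine lintegral_mono fun v => ?_
        grw [setLIntegral_rpow_dilation_window_le hε hε2 v, indicator_mul_right]
    _ = ENNReal.ofReal (4 * 2 ^ |c| * ε) * ∫⁻ v in Ioi 0, ENNReal.ofReal (v ^ (c + 1)) * F v := by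
        rw [lintegral_indicator measurableSet_Ioi, ← lintegral_const_mul' _ _ ENNReal.ofReal_ne_top]
        simp_rw [ENNReal.ofReal_mul (by positivity : (0 : ℝ) ≤ 4 * 2 ^ |c| * ε)]
        exact lintegral_congr fun v => by ring

lemma deriv_comp_eq_fderiv_apply {E : Type*} [NormedAddCommGroup E] [NormedSpace ℝ E]
    {F : E → ℝ} (hF : Differentiable ℝ F) {γ : ℝ → E} {v : E} {t : ℝ} (hγ : HasDerivAt γ v t) :
    deriv (fun s => F (γ s)) t = fderiv ℝ F (γ t) v := by
  rw [← hγ.deriv]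
  exact fderiv_comp_deriv t (hF _) hγ.differentiableAt

noncomputable def partialFst (w : ℝ × ℝ → ℝ) (p : ℝ × ℝ) : ℝ := deriv (fun t => w (t, p.2)) p.1

noncomputable def partialSnd (w : ℝ × ℝ → ℝ) (p : ℝ × ℝ) : ℝ := deriv (fun t => w (p.1, t)) p.2

section Plane

variable {w : ℝ × ℝ → ℝ}

lemma continuous_partialFst (hw : ContDiff ℝ 1 w) : Continuous (partialFst w) := by
  have h : partialFst w = fun p => fderiv ℝ w p (1, 0) := funext fun p =>
    deriv_comp_eq_fderiv_apply (hw.differentiable one_ne_zero)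
      ((hasDerivAt_id p.1).prodMk (hasDerivAt_const p.1 p.2))
  rw [h]
  exact (hw.continuous_fderiv one_ne_zero).clm_apply continuous_const

lemma continuous_partialSnd (hw : ContDiff ℝ 1 w) : Continuous (partialSnd w) := by
  have h : partialSnd w = fun p => fderiv ℝ w p (0, 1) := funext fun p =>
    deriv_comp_eq_fderiv_apply (hw.differentiable one_ne_zero)
      ((hasDerivAt_const p.2 p.1).prodMk (hasDerivAt_id p.2))
  rw [h]
  exact (hw.continuous_fderiv one_ne_zero).clm_apply continuous_const

lemma lintegral_enorm_sub_shift_sq_le (hw : ContDiff ℝ 1 w) (r s ρ : ℝ) {η : ℝ} (hρ : |ρ| ≤ η) :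
    ∫⁻ φ, ‖w (φ, r) - w (φ + s, r + ρ)‖ₑ ^ 2
      ≤ ENNReal.ofReal (4 * s ^ 2) * (∫⁻ φ, ‖partialFst w (φ, r)‖ₑ ^ 2)
        + ENNReal.ofReal (2 * η) *
            ∫⁻ v in Icc (r - η) (r + η), ∫⁻ φ, ‖partialSnd w (φ, v)‖ₑ ^ 2 := by
  have hwc := hw.continuous
  have hangular : ∫⁻ φ, ‖w (φ + s, r) - w (φ, r)‖ₑ ^ 2
      ≤ ENNReal.ofReal (2 * s ^ 2) * ∫⁻ φ, ‖partialFst w (φ, r)‖ₑ ^ 2 :=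
    lintegral_enorm_sub_comp_add_sq_le (f := fun t => w (t, r))
      (hw.comp (contDiff_id.prodMk contDiff_const)) s
  have hradial : ∫⁻ φ, ‖w (φ + s, r + ρ) - w (φ + s, r)‖ₑ ^ 2
      ≤ ENNReal.ofReal η * ∫⁻ v in Icc (r - η) (r + η), ∫⁻ φ, ‖partialSnd w (φ, v)‖ₑ ^ 2 := by
    rw [lintegral_add_right_eq_self (fun φ => ‖w (φ, r + ρ) - w (φ, r)‖ₑ ^ 2) s,
      ← lintegral_lintegral_swap
        ((continuous_partialSnd hw).measurable.enorm.pow_const 2).aemeasurable,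
      ← lintegral_const_mul' _ _ ENNReal.ofReal_ne_top]
    refine lintegral_mono fun φ => ?_
    exact enorm_sub_sq_le_setLIntegral_Icc (f := fun t => w (φ, t))
      (hw.comp (contDiff_const.prodMk contDiff_id)) (by simpa using hρ)
  calc ∫⁻ φ, ‖w (φ, r) - w (φ + s, r + ρ)‖ₑ ^ 2
      ≤ ∫⁻ φ, 2 * (‖w (φ + s, r) - w (φ, r)‖ₑ ^ 2 + ‖w (φ + s, r + ρ) - w (φ + s, r)‖ₑ ^ 2) := by
        refine lintegral_mono fun φ => ?_
        rw [enorm_sub_rev (w (φ + s, r)), enorm_sub_rev (w (φ + s, r + ρ))]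
        simpa using enorm_add_sq_le (w (φ, r) - w (φ + s, r)) (w (φ + s, r) - w (φ + s, r + ρ))
    _ = 2 * ((∫⁻ φ, ‖w (φ + s, r) - w (φ, r)‖ₑ ^ 2)
          + ∫⁻ φ, ‖w (φ + s, r + ρ) - w (φ + s, r)‖ₑ ^ 2) := by
        rw [lintegral_const_mul' _ _ ENNReal.ofNat_ne_top, lintegral_add_left (by fun_prop)]
    _ ≤ _ := by
        grw [hangular, hradial]
        have h4 : ENNReal.ofReal (4 * s ^ 2) = 2 * ENNReal.ofReal (2 * s ^ 2) := by
          rw [show (4 : ℝ) * s ^ 2 = 2 * (2 * s ^ 2) by ring, ENNReal.ofReal_mul zero_le_two,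
            ENNReal.ofReal_ofNat]
        rw [h4, ENNReal.ofReal_mul (q := η) zero_le_two, ENNReal.ofReal_ofNat]
        exact le_of_eq (by ring)

lemma enorm_shift_integrand_eq {b r : ℝ} (hr : 0 < r) (x : ℝ) :
    ‖r ^ (2 * b) * |x| ^ 2 * r‖ₑ = ENNReal.ofReal (r ^ (2 * b + 1)) * ‖x‖ₑ ^ 2 := by
  rw [Real.enorm_eq_ofReal (by positivity), enorm_sq_eq_ofReal_sq,
    ← ENNReal.ofReal_mul (by positivity), Real.rpow_add_one hr.ne', sq_abs]
  ring_nf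

lemma enorm_gradient_integrand_eq {b r : ℝ} (hr : 0 < r) (x y : ℝ) :
    ‖r ^ (2 * (b + 1)) * (|x / r| ^ 2 + |y| ^ 2) * r‖ₑ
      = ENNReal.ofReal (r ^ (2 * b + 1)) * ‖x‖ₑ ^ 2
        + ENNReal.ofReal (r ^ (2 * b + 2 + 1)) * ‖y‖ₑ ^ 2 := by
  have h1 : r ^ (2 * b + 1) = r ^ (2 * b) * r := Real.rpow_add_one hr.ne' _
  have h2 : r ^ (2 * (b + 1)) = r ^ (2 * b) * r ^ 2 := by
    rw [mul_add, mul_one, Real.rpow_add hr, Real.rpow_two]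
  have h3 : r ^ (2 * b + 2 + 1) = r ^ (2 * b) * r ^ 3 := by
    rw [Real.rpow_add hr, Real.rpow_add hr, Real.rpow_two, Real.rpow_one]
    ring
  rw [Real.enorm_eq_ofReal (by positivity), enorm_sq_eq_ofReal_sq, enorm_sq_eq_ofReal_sq,
    ← ENNReal.ofReal_mul (by positivity), ← ENNReal.ofReal_mul (by positivity),
    ← ENNReal.ofReal_add (by positivity) (by positivity), h1, h2, h3, sq_abs, sq_abs]
  congr 1
  field_simp

lemma measurable_lintegral_enorm_sq_comp_swap {u : ℝ × ℝ → ℝ} (hu : Continuous u) :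
    Measurable fun r => ∫⁻ φ, ‖u (φ, r)‖ₑ ^ 2 :=
  Measurable.lintegral_prod_right' (f := fun p => ‖u (p.2, p.1)‖ₑ ^ 2)
    ((hu.comp continuous_swap).measurable.enorm.pow_const 2)

lemma lintegral_weighted_shift_at_le (hw : ContDiff ℝ 1 w) {b ε r s ρ : ℝ} (hr : 0 < r)
    (hs : |s| ≤ ε) (hρ : |ρ| ≤ ε * r) :
    ∫⁻ φ, ‖r ^ (2 * b) * |w (φ, r) - w (φ + s, r + ρ)| ^ 2 * r‖ₑ
      ≤ ENNReal.ofReal (4 * ε ^ 2) *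
          (ENNReal.ofReal (r ^ (2 * b + 1)) * ∫⁻ φ, ‖partialFst w (φ, r)‖ₑ ^ 2)
        + ENNReal.ofReal (2 * ε) * (ENNReal.ofReal (r ^ (2 * b + 2)) *
            ∫⁻ v in Icc (r - ε * r) (r + ε * r), ∫⁻ φ, ‖partialSnd w (φ, v)‖ₑ ^ 2) := by
  have hε : 0 ≤ ε := (abs_nonneg s).trans hs
  have hs2 : ENNReal.ofReal (4 * s ^ 2) ≤ ENNReal.ofReal (4 * ε ^ 2) :=
    ENNReal.ofReal_le_ofReal (mul_le_mul_of_nonneg_left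
      (sq_le_sq' (abs_le.1 hs).1 (abs_le.1 hs).2) zero_le_four)
  have hweight : ENNReal.ofReal (r ^ (2 * b + 1)) * ENNReal.ofReal (2 * (ε * r))
      = ENNReal.ofReal (2 * ε) * ENNReal.ofReal (r ^ (2 * b + 2)) := by
    rw [← ENNReal.ofReal_mul (by positivity), ← ENNReal.ofReal_mul (by positivity),
      show 2 * b + 2 = 2 * b + 1 + 1 by ring, Real.rpow_add_one hr.ne' (2 * b + 1)]
    ring_nf
  simp_rw [enorm_shift_integrand_eq hr]
  rw [lintegral_const_mul' _ _ ENNReal.ofReal_ne_top]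
  grw [lintegral_enorm_sub_shift_sq_le hw r s ρ hρ, hs2]
  rw [mul_add, ← mul_assoc _ (ENNReal.ofReal (2 * (ε * r))), hweight]
  exact le_of_eq (by ring)

lemma lintegral_weighted_gradient_eq (hw : ContDiff ℝ 1 w) (b : ℝ) :
    ∫⁻ r in Ioi 0, ∫⁻ φ,
        ‖r ^ (2 * (b + 1)) * (|partialFst w (φ, r) / r| ^ 2 + |partialSnd w (φ, r)| ^ 2) * r‖ₑ
      = (∫⁻ r in Ioi 0, ENNReal.ofReal (r ^ (2 * b + 1)) * ∫⁻ φ, ‖partialFst w (φ, r)‖ₑ ^ 2)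
        + ∫⁻ r in Ioi 0, ENNReal.ofReal (r ^ (2 * b + 2 + 1)) *
            ∫⁻ φ, ‖partialSnd w (φ, r)‖ₑ ^ 2 := by
  rw [← lintegral_add_left
    (f := fun r => ENNReal.ofReal (r ^ (2 * b + 1)) * ∫⁻ φ, ‖partialFst w (φ, r)‖ₑ ^ 2)
    ((measurable_id.pow_const _).ennreal_ofReal.mul
      (measurable_lintegral_enorm_sq_comp_swap (continuous_partialFst hw)))]
  refine setLIntegral_congr_fun measurableSet_Ioi fun r (hr : 0 < r) => ?_
  simp_rw [enorm_gradient_integrand_eq hr]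
  have hm := (continuous_partialFst hw).measurable
  rw [lintegral_add_left (by fun_prop), lintegral_const_mul' _ _ ENNReal.ofReal_ne_top,
    lintegral_const_mul' _ _ ENNReal.ofReal_ne_top]

theorem lintegral_weighted_shift_le (hw : ContDiff ℝ 1 w) (b : ℝ) {ε : ℝ} (hε : 0 < ε)
    (hε2 : ε ≤ 1 / 2) (s ρ : ℝ → ℝ) (hs : ∀ r, 0 < r → |s r| ≤ ε)
    (hρ : ∀ r, 0 < r → |ρ r| ≤ ε * r) :
    ∫⁻ r in Ioi 0, ∫⁻ φ, ‖r ^ (2 * b) * |w (φ, r) - w (φ + s r, r + ρ r)| ^ 2 * r‖ₑ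
      ≤ ENNReal.ofReal ((4 + 8 * 2 ^ |2 * b + 2|) * ε ^ 2) *
        ∫⁻ r in Ioi 0, ∫⁻ φ, ‖r ^ (2 * (b + 1)) *
          (|partialFst w (φ, r) / r| ^ 2 + |partialSnd w (φ, r)| ^ 2) * r‖ₑ := by
  set G := fun r => ∫⁻ φ, ‖partialFst w (φ, r)‖ₑ ^ 2
  set F := fun v => ∫⁻ φ, ‖partialSnd w (φ, v)‖ₑ ^ 2
  have hG : Measurable G := measurable_lintegral_enorm_sq_comp_swap (continuous_partialFst hw)
  have hF : Measurable F := measurable_lintegral_enorm_sq_comp_swap (continuous_partialSnd hw)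
  calc ∫⁻ r in Ioi 0, ∫⁻ φ, ‖r ^ (2 * b) * |w (φ, r) - w (φ + s r, r + ρ r)| ^ 2 * r‖ₑ
      ≤ ∫⁻ r in Ioi 0, (ENNReal.ofReal (4 * ε ^ 2) * (ENNReal.ofReal (r ^ (2 * b + 1)) * G r)
          + ENNReal.ofReal (2 * ε) * (ENNReal.ofReal (r ^ (2 * b + 2)) *
              ∫⁻ v in Icc (r - ε * r) (r + ε * r), F v)) :=
        setLIntegral_mono' measurableSet_Ioi fun r (hr : 0 < r) =>
          lintegral_weighted_shift_at_le hw hr (hs r hr) (hρ r hr)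
    _ = ENNReal.ofReal (4 * ε ^ 2) * (∫⁻ r in Ioi 0, ENNReal.ofReal (r ^ (2 * b + 1)) * G r)
          + ENNReal.ofReal (2 * ε) * ∫⁻ r in Ioi 0, ENNReal.ofReal (r ^ (2 * b + 2)) *
              ∫⁻ v in Icc (r - ε * r) (r + ε * r), F v := by
        rw [lintegral_add_left (by fun_prop), 
          lintegral_const_mul' _ _ ENNReal.ofReal_ne_top,
          lintegral_const_mul' _ _ ENNReal.ofReal_ne_top]
    _ ≤ ENNReal.ofReal (4 * ε ^ 2) * (∫⁻ r in Ioi 0, ENNReal.ofReal (r ^ (2 * b + 1)) * G r)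
          + ENNReal.ofReal (2 * ε) * (ENNReal.ofReal (4 * 2 ^ |2 * b + 2| * ε) *
              ∫⁻ v in Ioi 0, ENNReal.ofReal (v ^ (2 * b + 2 + 1)) * F v) := by
        grw [setLIntegral_rpow_mul_setLIntegral_window_le hε hε2 hF]
    _ ≤ _ := by
        have hconst : ENNReal.ofReal (2 * ε) * ENNReal.ofReal (4 * 2 ^ |2 * b + 2| * ε)
            ≤ ENNReal.ofReal ((4 + 8 * 2 ^ |2 * b + 2|) * ε ^ 2) := by
          rw [← ENNReal.ofReal_mul (by positivity)]
          exact ENNReal.ofReal_le_ofReal (by nlinarith)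
        rw [lintegral_weighted_gradient_eq hw b, ← mul_assoc, mul_add]
        gcongr ?_ * _ + ?_ * _
        exact ENNReal.ofReal_le_ofReal
          (by nlinarith [pow_pos hε 2, Real.rpow_pos_of_pos two_pos |2 * b + 2|])

end Plane

section Cylinder

variable {m : ℕ} {W : ℝ × ℝ × (Fin m → ℝ) → ℝ}

lemma dphi_eq_fderiv (hW : Differentiable ℝ W) (p : ℝ × ℝ × (Fin m → ℝ)) :
    dphi W p = fderiv ℝ W p (1, 0, 0) :=
  deriv_comp_eq_fderiv_apply hW ((hasDerivAt_id p.1).prodMk (hasDerivAt_const _ _))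

lemma dr_eq_fderiv (hW : Differentiable ℝ W) (p : ℝ × ℝ × (Fin m → ℝ)) :
    dr W p = fderiv ℝ W p (0, 1, 0) :=
  deriv_comp_eq_fderiv_apply hW
    ((hasDerivAt_const _ _).prodMk ((hasDerivAt_id p.2.1).prodMk (hasDerivAt_const _ _)))

lemma dz_eq_fderiv (hW : Differentiable ℝ W) (ξ : Fin m) (p : ℝ × ℝ × (Fin m → ℝ)) :
    dz ξ W p = fderiv ℝ W p (0, 0, Pi.single ξ 1) := by
  have h := deriv_comp_eq_fderiv_apply hW ((hasDerivAt_const (p.2.2 ξ) p.1).prodMk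
    ((hasDerivAt_const _ p.2.1).prodMk (hasDerivAt_update p.2.2 ξ (p.2.2 ξ))))
  simp only [Function.update_eq_self] at h
  exact h

noncomputable def gradientDensity (b : ℝ) (W : ℝ × ℝ × (Fin m → ℝ) → ℝ)
    (p : ℝ × ℝ × (Fin m → ℝ)) : ℝ :=
  p.2.1 ^ (2 * (b + 1)) * (|dphi W p / p.2.1| ^ 2 + |dr W p| ^ 2 + ∑ ξ, |dz ξ W p| ^ 2) * p.2.1

lemma support_gradientDensity_subset (hW : Differentiable ℝ W) (b : ℝ) :
    Function.support (gradientDensity b W) ⊆ tsupport W := by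
  intro p hp
  by_contra hpW
  have h0 : fderiv ℝ W p = 0 := Function.notMem_support.1 fun h => hpW (support_fderiv_subset ℝ h)
  apply hp
  simp [gradientDensity, dphi_eq_fderiv hW, dr_eq_fderiv hW, dz_eq_fderiv hW, h0]

lemma continuous_gradientDensity (hW : ContDiff ℝ 1 W) (hWr : tsupport W ⊆ {p | 0 < p.2.1})
    (b : ℝ) : Continuous (gradientDensity b W) := by
  have hW' := hW.differentiable one_ne_zero
  have hD := hW.continuous_fderiv one_ne_zero
  refine ContinuousOn.continuous_of_tsupport_subset ?_ (isOpen_lt continuous_const (by fun_prop))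
    ((closure_minimal (support_gradientDensity_subset hW' b) (isClosed_tsupport W)).trans hWr)
  have heq : gradientDensity b W = fun p => p.2.1 ^ (2 * (b + 1)) *
      (|fderiv ℝ W p (1, 0, 0) / p.2.1| ^ 2 + |fderiv ℝ W p (0, 1, 0)| ^ 2
        + ∑ ξ, |fderiv ℝ W p (0, 0, Pi.single ξ 1)| ^ 2) * p.2.1 := by
    ext p
    simp only [gradientDensity, dphi_eq_fderiv hW', dr_eq_fderiv hW', dz_eq_fderiv hW']
  intro p (hp : 0 < p.2.1)
  have hp' : p.2.1 ≠ 0 := hp.ne'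
  rw [heq]
  have hcoef : ∀ v, Continuous fun p => fderiv ℝ W p v := fun v => hD.clm_apply continuous_const
  have hr : ContinuousAt (fun p : ℝ × ℝ × (Fin m → ℝ) => p.2.1) p := by fun_prop
  refine ContinuousAt.continuousWithinAt (((hr.rpow_const (Or.inl hp')).mul
    (((((hcoef _).continuousAt.div hr hp').abs.pow 2).add ((hcoef _).continuousAt.abs.pow 2)).add
      (continuous_finsetSum _ fun ξ _ => (hcoef _).abs.pow 2).continuousAt)).mul hr)

lemma gradientDensity_nonneg (hW : Differentiable ℝ W) (hWr : tsupport W ⊆ {p | 0 < p.2.1})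
    (b : ℝ) (p : ℝ × ℝ × (Fin m → ℝ)) : 0 ≤ gradientDensity b W p := by
  by_cases hp : p ∈ Function.support (gradientDensity b W)
  · have hr : 0 < p.2.1 := hWr (support_gradientDensity_subset hW b hp)
    unfold gradientDensity
    positivity
  · rw [Function.notMem_support.1 hp]

lemma enorm_gradient_integrand_le_gradientDensity {b r : ℝ} (hr : 0 < r) (φ : ℝ)
    (z : Fin m → ℝ) :
    ‖r ^ (2 * (b + 1)) * (|dphi W (φ, r, z) / r| ^ 2 + |dr W (φ, r, z)| ^ 2) * r‖ₑ
      ≤ ‖gradientDensity b W (φ, r, z)‖ₑ := by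
  rw [enorm_le_iff_norm_le, Real.norm_eq_abs, Real.norm_eq_abs]
  refine abs_le_abs_of_nonneg (by positivity) ?_
  have hz : 0 ≤ ∑ ξ, |dz ξ W (φ, r, z)| ^ 2 := by positivity
  exact mul_le_mul_of_nonneg_right
    (mul_le_mul_of_nonneg_left (le_add_of_nonneg_right hz) (by positivity)) hr.le

lemma lintegral_weighted_shift_le_gradientDensity (hW : ContDiff ℝ 1 W) (b : ℝ) {ε : ℝ}
    (hε : 0 < ε) (hε2 : ε ≤ 1 / 2) {Φ' R' : ℝ × (Fin m → ℝ) → ℝ}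
    (hΦ : ∀ r, 0 < r → ∀ z, |Φ' (r, z)| ≤ ε) (hR : ∀ r, 0 < r → ∀ z, |R' (r, z)| ≤ ε * r)
    (z : Fin m → ℝ) :
    ∫⁻ r in Ioi 0, ∫⁻ φ,
        ‖r ^ (2 * b) * |W (φ, r, z) - W (φ + Φ' (r, z), r + R' (r, z), z)| ^ 2 * r‖ₑ
      ≤ ENNReal.ofReal ((4 + 8 * 2 ^ |2 * b + 2|) * ε ^ 2) *
          ∫⁻ r in Ioi 0, ∫⁻ φ, ‖gradientDensity b W (φ, r, z)‖ₑ := by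
  refine (lintegral_weighted_shift_le (w := fun q => W (q.1, q.2, z)) (hW.comp (by fun_prop))
    b hε hε2 _ _ (fun r hr => hΦ r hr z) (fun r hr => hR r hr z)).trans ?_
  gcongr _ * ?_
  exact setLIntegral_mono' measurableSet_Ioi fun r hr => lintegral_mono fun φ =>
    enorm_gradient_integrand_le_gradientDensity hr φ z

lemma integrable_gradientDensity (hW : ContDiff ℝ 1 W) (hWc : HasCompactSupport W)
    (hWr : tsupport W ⊆ {p | 0 < p.2.1}) (b : ℝ) :
    Integrable (fun p : ((Fin m → ℝ) × ℝ) × ℝ => gradientDensity b W (p.2, p.1.2, p.1.1))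
      ((volume.prod (volume.restrict (Ioi 0))).prod volume) := by
  let e : ((Fin m → ℝ) × ℝ) × ℝ ≃ₜ ℝ × ℝ × (Fin m → ℝ) :=
    (Homeomorph.prodComm _ _).trans ((Homeomorph.refl ℝ).prodCongr (Homeomorph.prodComm _ _))
  have hcs : HasCompactSupport (gradientDensity b W) :=
    hWc.mono' (support_gradientDensity_subset (hW.differentiable one_ne_zero) b)
  exact (((continuous_gradientDensity hW hWr b).comp e.continuous).integrable_of_hasCompactSupport
    (hcs.comp_homeomorph e)).mono_measure
      (Measure.prod_mono (Measure.prod_mono le_rfl Measure.restrict_le_self) le_rfl)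

end Cylinder

lemma ofReal_integral_integral_integral_le {X Y Z : Type*} [MeasurableSpace X]
    [MeasurableSpace Y] [MeasurableSpace Z] {μ : Measure X} {ν : Measure Y} {κ : Measure Z}
    (G : X → Y → Z → ℝ) :
    ENNReal.ofReal (∫ x, ∫ y, ∫ z, G x y z ∂κ ∂ν ∂μ) ≤ ∫⁻ x, ∫⁻ y, ∫⁻ z, ‖G x y z‖ₑ ∂κ ∂ν ∂μ :=
  (Real.ofReal_le_enorm _).trans <| (enorm_integral_le_lintegral_enorm _).trans <|
    lintegral_mono fun _ => (enorm_integral_le_lintegral_enorm _).trans <|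
      lintegral_mono fun _ => enorm_integral_le_lintegral_enorm _

lemma lintegral_lintegral_lintegral_enorm_eq_ofReal_integral {X Y Z : Type*} [MeasurableSpace X]
    [MeasurableSpace Y] [MeasurableSpace Z] {μ : Measure X} {ν : Measure Y} {κ : Measure Z}
    [SFinite μ] [SFinite ν] [SFinite κ] {G : X → Y → Z → ℝ}
    (hG : Integrable (fun p : (X × Y) × Z => G p.1.1 p.1.2 p.2) ((μ.prod ν).prod κ))
    (hG0 : ∀ x y z, 0 ≤ G x y z) :
    ∫⁻ x, ∫⁻ y, ∫⁻ z, ‖G x y z‖ₑ ∂κ ∂ν ∂μ = ENNReal.ofReal (∫ x, ∫ y, ∫ z, G x y z ∂κ ∂ν ∂μ) := by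
  have hint := integral_prod _ hG
  rw [integral_prod _ hG.integral_prod_left] at hint
  have hlint := lintegral_prod _ hG.aemeasurable.enorm
  rw [lintegral_prod _ hG.aemeasurable.enorm.lintegral_prod_right'] at hlint
  rw [← hint, ← hlint, ofReal_integral_eq_lintegral_ofReal hG (Filter.Eventually.of_forall
    fun p => hG0 _ _ _)]
  exact lintegral_congr fun p => Real.enorm_eq_ofReal (hG0 _ _ _)

theorem stmt9 (m : ℕ) (b : ℝ) :
    ∃ C > (0 : ℝ), ∀ ε₀ : ℝ, 0 < ε₀ → ε₀ ≤ 1 / 2 →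
      ∀ Φ' R' : ℝ × (Fin m → ℝ) → ℝ,
        ContinuousOn Φ' {p | 0 < p.1} → ContinuousOn R' {p | 0 < p.1} →
        (∀ r : ℝ, 0 < r → ∀ z : Fin m → ℝ, |Φ' (r, z)| ≤ ε₀) →
        (∀ r : ℝ, 0 < r → ∀ z : Fin m → ℝ, |R' (r, z)| ≤ ε₀ * r) →
        ∀ W : ℝ × ℝ × (Fin m → ℝ) → ℝ,
          ContDiff ℝ 1 W → HasCompactSupport W →
          tsupport W ⊆ {p : ℝ × ℝ × (Fin m → ℝ) | 0 < p.2.1} →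
          (∫ z : Fin m → ℝ, ∫ r in Set.Ioi (0 : ℝ), ∫ φ : ℝ,
              r ^ (2 * b) *
                |W (φ, r, z) - W (φ + Φ' (r, z), r + R' (r, z), z)| ^ 2 * r) ≤
          C * ε₀ ^ 2 *
            ((∫ z : Fin m → ℝ, ∫ r in Set.Ioi (0 : ℝ), ∫ φ : ℝ,
                r ^ (2 * b) * |W (φ, r, z)| ^ 2 * r) +
             (∫ z : Fin m → ℝ, ∫ r in Set.Ioi (0 : ℝ), ∫ φ : ℝ,
                r ^ (2 * (b + 1)) *
                  (|dphi W (φ, r, z) / r| ^ 2 + |dr W (φ, r, z)| ^ 2 +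
                    ∑ ξ, |dz ξ W (φ, r, z)| ^ 2) * r)) := by
  refine ⟨4 + 8 * 2 ^ |2 * b + 2|, by positivity, ?_⟩
  intro ε₀ hε hε2 Φ' R' _ _ hΦ hR W hW hWc hWr
  have hW' := hW.differentiable one_ne_zero
  have hA : 0 ≤ ∫ z : Fin m → ℝ, ∫ r in Ioi (0 : ℝ), ∫ φ : ℝ, r ^ (2 * b) * |W (φ, r, z)| ^ 2 * r :=
    integral_nonneg fun z => setIntegral_nonneg measurableSet_Ioi fun r (hr : 0 < r) =>
      integral_nonneg fun φ => by positivity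
  have hB : 0 ≤ ∫ z : Fin m → ℝ, ∫ r in Ioi (0 : ℝ), ∫ φ : ℝ, gradientDensity b W (φ, r, z) :=
    integral_nonneg fun z => integral_nonneg fun r => integral_nonneg fun φ =>
      gradientDensity_nonneg hW' hWr b _
  refine (ENNReal.ofReal_le_ofReal_iff (mul_nonneg (by positivity) (add_nonneg hA hB))).1 ?_
  calc _ ≤ _ := ofReal_integral_integral_integral_le _
    _ ≤ _ := lintegral_mono (lintegral_weighted_shift_le_gradientDensity hW b hε hε2 hΦ hR)
    _ = ENNReal.ofReal ((4 + 8 * 2 ^ |2 * b + 2|) * ε₀ ^ 2) * ENNReal.ofReal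
          (∫ z : Fin m → ℝ, ∫ r in Ioi (0 : ℝ), ∫ φ : ℝ, gradientDensity b W (φ, r, z)) := by
        rw [lintegral_const_mul' _ _ ENNReal.ofReal_ne_top,
          lintegral_lintegral_lintegral_enorm_eq_ofReal_integral
            (G := fun z r φ => gradientDensity b W (φ, r, z))
            (integrable_gradientDensity hW hWc hWr b)
            fun z r φ => gradientDensity_nonneg hW' hWr b _]
    _ ≤ _ := by
        rw [← ENNReal.ofReal_mul (by positivity)]
        gcongr
        exact le_add_of_nonneg_left hA
end

section
/- Let m ∈ ℕ, b ∈ ℝ. Then there exists C > 0, depending only on b, such that the following holds. Let Φ' : (0,∞) × ℝ^m → ℝ be any function, and let R' : (0,∞) × ℝ^m → ℝ be continuously differentiable in r with |R'(r,z)| ≤ r/2 and |∂_r R'(r,z)| ≤ 1/2 for all r > 0 and z ∈ ℝ^m. Then for every nonnegative measurable function W : ℝ × (0,∞) × ℝ^m → ℝ, ∫_{ℝ^m} ∫_0^∞ ∫_ℝ r^{2b} W(φ + Φ'(r,z), r + R'(r,z), z)² · r dφ dr dz ≤ C · ∫_{ℝ^m} ∫_0^∞ ∫_ℝ r^{2b}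 W(φ, r, z)² · r dφ dr dz (both sides possibly infinite). -/
/-!
For fixed `z` the angular shift `φ ↦ φ + Φ'` costs nothing, by translation invariance of
Lebesgue measure, so only the radial map `f r = r + R'(r, z)` matters. Since `f' ≥ 1/2`, `f` is
injective and the one-dimensional change of variables `ρ = f r` applies with Jacobian factor at
most `2`; since `r / 2 ≤ f r ≤ 3 r / 2`, the weight `r ^ (2b + 1)` changes by a factor at most
`2 ^ |2b + 1|`.
-/

open MeasureTheory Set
open scoped ENNReal

theorem Real.rpow_le_two_rpow_abs_mul_rpow {b r ρ : ℝ} (hr : 0 < r) (hρ : 0 < ρ)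
    (h₁ : r ≤ 2 * ρ) (h₂ : ρ ≤ 2 * r) : r ^ b ≤ 2 ^ |b| * ρ ^ b := by
  rcases le_or_gt 0 b with hb | hb
  · calc r ^ b ≤ (2 * ρ) ^ b := Real.rpow_le_rpow hr.le h₁ hb
      _ = 2 ^ b * ρ ^ b := Real.mul_rpow zero_le_two hρ.le
      _ ≤ 2 ^ |b| * ρ ^ b := by
        gcongr
        exacts [one_le_two, le_abs_self b]
  · calc r ^ b ≤ (ρ / 2) ^ b := Real.rpow_le_rpow_of_nonpos (by positivity) (by linarith) hb.le
      _ = 2 ^ (-b) * ρ ^ b := by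
        rw [Real.div_rpow hρ.le zero_le_two, Real.rpow_neg zero_le_two]
        ring
      _ = 2 ^ |b| * ρ ^ b := by rw [abs_of_neg hb]

theorem setLIntegral_mul_comp_le_of_le_abs_deriv_mul {s t : Set ℝ} {f f' : ℝ → ℝ}
    (hs : MeasurableSet s) (hf' : ∀ x ∈ s, HasDerivWithinAt f (f' x) s x) (hf : InjOn f s)
    (hst : MapsTo f s t) {w v : ℝ → ℝ≥0∞}
    (hwv : ∀ x ∈ s, w x ≤ ENNReal.ofReal |f' x| * v (f x)) (G : ℝ → ℝ≥0∞) :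
    ∫⁻ x in s, w x * G (f x) ≤ ∫⁻ y in t, v y * G y :=
  calc ∫⁻ x in s, w x * G (f x)
      ≤ ∫⁻ x in s, ENNReal.ofReal |f' x| * (v (f x) * G (f x)) :=
        setLIntegral_mono' hs fun x hx => by
          rw [← mul_assoc]
          exact mul_le_mul_left (hwv x hx) _
    _ = ∫⁻ y in f '' s, v y * G y :=
        (lintegral_image_eq_lintegral_abs_deriv_mul hs hf' hf fun y => v y * G y).symm
    _ ≤ ∫⁻ y in t, v y * G y := lintegral_mono_set hst.image_subset

theorem strictMonoOn_id_add_of_abs_deriv_lt_one {D : Set ℝ} (hD : Convex ℝ D) (hDo : IsOpen D)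
    {R R' : ℝ → ℝ} (hR : ∀ x ∈ D, HasDerivAt R (R' x) x) (hR' : ∀ x ∈ D, |R' x| < 1) :
    StrictMonoOn (fun x => x + R x) D := by
  have hf : ∀ x ∈ D, HasDerivAt (fun x => x + R x) (1 + R' x) x :=
    fun x hx => (hasDerivAt_id x).add (hR x hx)
  refine strictMonoOn_of_hasDerivWithinAt_pos (f' := fun x => 1 + R' x) hD
    (fun x hx => (hf x hx).continuousAt.continuousWithinAt) (fun x hx => ?_) (fun x hx => ?_)
  all_goals simp only [hDo.interior_eq] at hx ⊢
  · exact (hf x hx).hasDerivWithinAt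
  · linarith [(abs_lt.mp (hR' x hx)).1]

theorem setLIntegral_Ioi_rpow_mul_comp_add_le {R R' : ℝ → ℝ}
    (hR : ∀ r ∈ Ioi (0 : ℝ), HasDerivAt R (R' r) r)
    (hR_le : ∀ r ∈ Ioi (0 : ℝ), |R r| ≤ r / 2) (hR'_le : ∀ r ∈ Ioi (0 : ℝ), |R' r| ≤ 1 / 2)
    (e : ℝ) (G : ℝ → ℝ≥0∞) :
    ∫⁻ r in Ioi 0, ENNReal.ofReal (r ^ e) * G (r + R r) ≤
      ENNReal.ofReal (2 * 2 ^ |e|) * ∫⁻ ρ in Ioi 0, ENNReal.ofReal (ρ ^ e) * G ρ := by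
  have hf_bounds : ∀ r ∈ Ioi (0 : ℝ), r ≤ 2 * (r + R r) ∧ r + R r ≤ 2 * r := by
    intro r hr
    have hr : (0 : ℝ) < r := hr
    constructor <;> linarith [abs_le.mp (hR_le r hr)]
  have hmono : StrictMonoOn (fun r => r + R r) (Ioi 0) :=
    strictMonoOn_id_add_of_abs_deriv_lt_one (convex_Ioi 0) isOpen_Ioi hR
      fun r hr => (hR'_le r hr).trans_lt (by norm_num)
  have hmaps : MapsTo (fun r => r + R r) (Ioi 0) (Ioi 0) := fun r hr => by
    have hr : (0 : ℝ) < r := hr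
    show 0 < r + R r
    linarith [hf_bounds r hr]
  rw [← lintegral_const_mul' _ _ ENNReal.ofReal_ne_top]
  simp_rw [← mul_assoc]
  refine setLIntegral_mul_comp_le_of_le_abs_deriv_mul measurableSet_Ioi
    (fun r hr => ((hasDerivAt_id r).add (hR r hr)).hasDerivWithinAt) hmono.injOn hmaps
    (fun r hr => ?_) G
  have hr : (0 : ℝ) < r := hr
  obtain ⟨h₁, h₂⟩ := hf_bounds r hr
  have hweight : r ^ e ≤ 2 ^ |e| * (r + R r) ^ e :=
    Real.rpow_le_two_rpow_abs_mul_rpow hr (hmaps hr) h₁ h₂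
  have hjac : (1 : ℝ) ≤ 2 * |1 + R' r| := by
    have := (abs_le.mp (hR'_le r hr)).1
    rw [abs_of_pos (by linarith)]
    linarith
  have hbound_nonneg : 0 ≤ 2 ^ |e| * (r + R r) ^ e :=
    mul_nonneg (by positivity) (Real.rpow_nonneg (hmaps hr).le e)
  rw [← ENNReal.ofReal_mul (by positivity), ← ENNReal.ofReal_mul (abs_nonneg _)]
  refine ENNReal.ofReal_le_ofReal ?_
  calc r ^ e ≤ 2 ^ |e| * (r + R r) ^ e := hweight
    _ ≤ 2 * |1 + R' r| * (2 ^ |e| * (r + R r) ^ e) := le_mul_of_one_le_left hbound_nonneg hjac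
    _ = |1 + R' r| * (2 * 2 ^ |e| * (r + R r) ^ e) := by ring

theorem lintegral_ofReal_rpow_mul_comp_add_mul (b : ℝ) {r : ℝ} (hr : 0 < r) (h : ℝ → ℝ)
    (c : ℝ) :
    ∫⁻ φ, ENNReal.ofReal (r ^ (2 * b) * h (φ + c) * r) =
      ENNReal.ofReal (r ^ (2 * b + 1)) * ∫⁻ φ, ENNReal.ofReal (h φ) := by
  have hweight : ∀ x : ℝ, r ^ (2 * b) * x * r = r ^ (2 * b + 1) * x := fun x => by
    rw [Real.rpow_add_one hr.ne']
    ring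
  simp_rw [hweight, ENNReal.ofReal_mul (Real.rpow_nonneg hr.le _)]
  rw [lintegral_const_mul' _ _ ENNReal.ofReal_ne_top,
    lintegral_add_right_eq_self (fun φ => ENNReal.ofReal (h φ)) c]

theorem setLIntegral_Ioi_lintegral_comp_add_le {Φ R R' : ℝ → ℝ}
    (hR : ∀ r ∈ Ioi (0 : ℝ), HasDerivAt R (R' r) r)
    (hR_le : ∀ r ∈ Ioi (0 : ℝ), |R r| ≤ r / 2) (hR'_le : ∀ r ∈ Ioi (0 : ℝ), |R' r| ≤ 1 / 2)
    (b : ℝ) (W : ℝ → ℝ → ℝ) :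
    ∫⁻ r in Ioi 0, ∫⁻ φ, ENNReal.ofReal (r ^ (2 * b) * W (φ + Φ r) (r + R r) ^ 2 * r) ≤
      ENNReal.ofReal (2 * 2 ^ |2 * b + 1|) *
        ∫⁻ r in Ioi 0, ∫⁻ φ, ENNReal.ofReal (r ^ (2 * b) * W φ r ^ 2 * r) := by
  let G : ℝ → ℝ≥0∞ := fun ρ => ∫⁻ φ, ENNReal.ofReal (W φ ρ ^ 2)
  calc ∫⁻ r in Ioi 0, ∫⁻ φ, ENNReal.ofReal (r ^ (2 * b) * W (φ + Φ r) (r + R r) ^ 2 * r)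
      = ∫⁻ r in Ioi 0, ENNReal.ofReal (r ^ (2 * b + 1)) * G (r + R r) :=
        setLIntegral_congr_fun measurableSet_Ioi fun r hr =>
          lintegral_ofReal_rpow_mul_comp_add_mul b hr (fun φ => W φ (r + R r) ^ 2) _
    _ ≤ ENNReal.ofReal (2 * 2 ^ |2 * b + 1|) *
          ∫⁻ ρ in Ioi 0, ENNReal.ofReal (ρ ^ (2 * b + 1)) * G ρ :=
        setLIntegral_Ioi_rpow_mul_comp_add_le hR hR_le hR'_le _ G
    _ = _ := by
      congr 1
      refine setLIntegral_congr_fun measurableSet_Ioi fun r hr => ?_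
      simpa using (lintegral_ofReal_rpow_mul_comp_add_mul b hr (fun φ => W φ r ^ 2) 0).symm

theorem stmt10 (m : ℕ) (b : ℝ) :
    ∃ C > (0 : ℝ), ∀ Φ' R' : ℝ × (Fin m → ℝ) → ℝ,
      -- `R'` is continuously differentiable in `r` on `(0, ∞)`
      (∀ z : Fin m → ℝ, ContDiffOn ℝ 1 (fun r => R' (r, z)) (Set.Ioi (0 : ℝ))) →
      (∀ r : ℝ, 0 < r → ∀ z : Fin m → ℝ, |R' (r, z)| ≤ r / 2) →
      (∀ r : ℝ, 0 < r → ∀ z : Fin m → ℝ, |deriv (fun s => R' (s, z)) r| ≤ 1 / 2) →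
      ∀ W : ℝ × ℝ × (Fin m → ℝ) → ℝ, Measurable W → (∀ p, 0 ≤ W p) →
        (∫⁻ z : Fin m → ℝ, ∫⁻ r in Set.Ioi (0 : ℝ), ∫⁻ φ : ℝ,
            ENNReal.ofReal
              (r ^ (2 * b) * W (φ + Φ' (r, z), r + R' (r, z), z) ^ 2 * r)) ≤
        ENNReal.ofReal C *
          (∫⁻ z : Fin m → ℝ, ∫⁻ r in Set.Ioi (0 : ℝ), ∫⁻ φ : ℝ,
            ENNReal.ofReal (r ^ (2 * b) * W (φ, r, z) ^ 2 * r)) := by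
  refine ⟨2 * 2 ^ |2 * b + 1|, by positivity,
    fun Φ' R' hR'_smooth hR'_le hR'_deriv W _ _ => ?_⟩
  rw [← lintegral_const_mul' _ _ ENNReal.ofReal_ne_top]
  refine lintegral_mono fun z => setLIntegral_Ioi_lintegral_comp_add_le (fun r hr => ?_)
    (fun r hr => hR'_le r hr z) (fun r hr => hR'_deriv r hr z) b fun φ ρ => W (φ, ρ, z)
  exact (((hR'_smooth z).differentiableOn one_ne_zero).differentiableAt
    (isOpen_Ioi.mem_nhds hr)).hasDerivAt
end
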